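/- arXiv:math/0104190 — 8 statements merged into one kernel-verified Lean document; each statement's English description precedes it below -/
import Mathlib

section
/- If Y is an integrable real random variable and y ∈ ℝ with P(Y ≤ y) > 0, then for every event F with P(F) ≥ P(Y ≤ y) and P(F ∩ {Y ≤ y}) > 0, the conditional expectation satisfies E[Y | F] ≥ E[Y | Y ≤ y]. -/
/-!
Bathtub principle: since `Y - y` is `≤ 0` exactly on `A = {Y ≤ y}`, the set `A` minimises
`S ↦ ∫_S (Y - y)`. Comparing with `S = F` and `S = ∅` gives
`∫_A Y - y P(A) ≤ ∫_F Y - y P(F)` and `E[Y | A] ≤ y`; together with `P(A) ≤ P(F)` these yield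
`E[Y | A] P(F) ≤ ∫_F Y`.
-/

open MeasureTheory

/-- Conditional expectation of a random variable given an event of positive probability. -/
noncomputable def condExpEvent {Ω : Type*} [MeasurableSpace Ω] (μ : Measure Ω)
    (Y : Ω → ℝ) (A : Set Ω) : ℝ :=
  (∫ ω in A, Y ω ∂μ) / (μ A).toReal

namespace MeasureTheory

variable {Ω : Type*} [MeasurableSpace Ω] {μ : Measure Ω} [IsFiniteMeasure μ] {Y : Ω → ℝ}

theorem setIntegral_sub_const (hY : Integrable Y μ) (c : ℝ) (s : Set Ω) :
    ∫ ω in s, (Y ω - c) ∂μ = ∫ ω in s, Y ω ∂μ - μ.real s * c := by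
  rw [integral_sub hY.integrableOn (integrable_const c), setIntegral_const, smul_eq_mul]

theorem setIntegral_sublevel_sub_le (hY : Integrable Y μ) (y : ℝ) (S : Set Ω) :
    ∫ ω in {ω | Y ω ≤ y}, (Y ω - y) ∂μ ≤ ∫ ω in S, (Y ω - y) ∂μ := by
  have hg : Integrable (fun ω => Y ω - y) μ := hY.sub (integrable_const y)
  have hA : NullMeasurableSet {ω | Y ω ≤ y} μ :=
    nullMeasurableSet_le hY.aemeasurable aemeasurable_const
  have hT := measurableSet_toMeasurable μ S
  rw [← Measure.restrict_toMeasurable_of_sFinite S, ← integral_indicator₀ hA,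
    ← integral_indicator hT]
  refine integral_mono (hg.indicator₀ hA) (hg.indicator hT) fun ω => ?_
  by_cases hω : Y ω ≤ y <;> by_cases hωT : ω ∈ toMeasurable μ S <;>
    simp only [Set.indicator, Set.mem_ofPred_eq, hω, hωT, if_true, if_false] <;> linarith

end MeasureTheory

theorem stmt0_general {Ω : Type*} [MeasurableSpace Ω] (μ : Measure Ω) [IsProbabilityMeasure μ]
    (Y : Ω → ℝ) (hY : Integrable Y μ) (y : ℝ)
    (h0 : 0 < μ {ω | Y ω ≤ y})
    (F : Set Ω)
    (hge : μ {ω | Y ω ≤ y} ≤ μ F) :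
    condExpEvent μ Y {ω | Y ω ≤ y} ≤ condExpEvent μ Y F := by
  have hA : 0 < μ.real {ω | Y ω ≤ y} := ENNReal.toReal_pos h0.ne' (measure_ne_top μ _)
  have hAF : μ.real {ω | Y ω ≤ y} ≤ μ.real F := ENNReal.toReal_mono (measure_ne_top μ F) hge
  have hsub := setIntegral_sublevel_sub_le hY y F
  have hnonpos := setIntegral_sublevel_sub_le hY y ∅
  rw [Measure.restrict_empty, integral_zero_measure] at hnonpos
  simp only [setIntegral_sub_const hY] at hsub hnonpos
  rw [condExpEvent, condExpEvent, ← measureReal_def, ← measureReal_def,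
    div_le_div_iff₀ hA (hA.trans_le hAF)]
  nlinarith [mul_nonneg (sub_nonneg.2 hnonpos) (sub_nonneg.2 hAF)]

/-- If `Y` is integrable, `P(Y ≤ y) > 0`, and `F` is an event with `P(F) ≥ P(Y ≤ y)` and
`P(F ∩ {Y ≤ y}) > 0`, then `E[Y | F] ≥ E[Y | Y ≤ y]`. -/
theorem stmt0 {Ω : Type*} [MeasurableSpace Ω] (μ : Measure Ω) [IsProbabilityMeasure μ]
    (Y : Ω → ℝ) (hY : Integrable Y μ) (y : ℝ)
    (h0 : 0 < μ {ω | Y ω ≤ y})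
    (F : Set Ω) (hF : MeasurableSet F)
    (hge : μ {ω | Y ω ≤ y} ≤ μ F)
    (hpos : 0 < μ (F ∩ {ω | Y ω ≤ y})) :
    condExpEvent μ Y {ω | Y ω ≤ y} ≤ condExpEvent μ Y F :=
  stmt0_general μ Y hY y h0 F hge
end

section
/- The Conditional Value-at-Risk ρ(X) = −E[X | X ≤ Q_α(X)] is subadditive on 𝓜: for X, Y ∈ 𝓜 with X + Y ∈ 𝓜, ρ(X + Y) ≤ ρ(X) + ρ(Y). -/
open MeasureTheory

/-- The α-quantile `Q_α(X) = inf {x | P(X ≤ x) ≥ α}`. -/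
noncomputable def quantile {Ω : Type*} [MeasurableSpace Ω] (μ : Measure Ω)
    (α : ℝ) (X : Ω → ℝ) : ℝ :=
  sInf {x : ℝ | α ≤ (μ {ω | X ω ≤ x}).toReal}

/-- CVaR `ρ(X) = -E[X | X ≤ Q_α(X)]`. -/
noncomputable def cvar {Ω : Type*} [MeasurableSpace Ω] (μ : Measure Ω)
    (α : ℝ) (X : Ω → ℝ) : ℝ :=
  -condExpEvent μ X {ω | X ω ≤ quantile μ α X}

/-
Write `B_X = {X ≤ Q_α(X)}`. For any integrable `f`, the set `{f ≤ 0}` minimises `A ↦ ∫_A f`, because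
`𝟙_{f ≤ 0} f = min f 0 ≤ 𝟙_A f` pointwise. Applied to `f = X - Q_α(X)` this says that among all events
of probability `α` the integral of `X` is smallest over `B_X`. The hypothesis on `𝓜` gives the event
`B_{X+Y}` probability `α`, so `∫_{B_{X+Y}} (X + Y) ≥ ∫_{B_X} X + ∫_{B_Y} Y`; dividing by `-α` is the claim.
-/

section SetIntegral

variable {Ω : Type*} [MeasurableSpace Ω] {μ : Measure Ω} {A : Set Ω}

theorem setIntegral_setOf_nonpos_le {f : Ω → ℝ} (hf : Integrable f μ) (hA : NullMeasurableSet A μ) :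
    ∫ ω in {ω | f ω ≤ 0}, f ω ∂μ ≤ ∫ ω in A, f ω ∂μ := by
  have hB : NullMeasurableSet {ω | f ω ≤ 0} μ :=
    hf.aestronglyMeasurable.nullMeasurableSet_le aestronglyMeasurable_const
  rw [← integral_indicator₀ hB, ← integral_indicator₀ hA]
  refine integral_mono (hf.indicator₀ hB) (hf.indicator₀ hA) fun ω => ?_
  classical
  simp only [Set.indicator_apply, Set.mem_ofPred_eq]
  split_ifs <;> linarith

theorem setIntegral_setOf_le_sub_le [IsFiniteMeasure μ] {X : Ω → ℝ} (hX : Integrable X μ) (q : ℝ)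
    (hA : NullMeasurableSet A μ) :
    ∫ ω in {ω | X ω ≤ q}, X ω ∂μ - q * μ.real {ω | X ω ≤ q} ≤ ∫ ω in A, X ω ∂μ - q * μ.real A := by
  have key := setIntegral_setOf_nonpos_le (hX.sub (integrable_const q)) hA
  simp only [Pi.sub_apply, sub_nonpos, integral_sub hX.integrableOn (integrable_const q).integrableOn,
    setIntegral_const, smul_eq_mul] at key
  linarith

end SetIntegral

theorem stmt2_general {Ω : Type*} [MeasurableSpace Ω] (μ : Measure Ω) [IsProbabilityMeasure μ]
    (α : ℝ)
    (M : Set (Ω → ℝ))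
    (hint : ∀ X ∈ M, Integrable X μ)
    (hq : ∀ X ∈ M, (μ {ω | X ω ≤ quantile μ α X}).toReal = α)
    (X Y : Ω → ℝ) (hX : X ∈ M) (hY : Y ∈ M) (hXY : X + Y ∈ M) :
    cvar μ α (X + Y) ≤ cvar μ α X + cvar μ α Y := by
  have hα : 0 ≤ α := hq X hX ▸ ENNReal.toReal_nonneg
  have hiX := hint X hX
  have hiY := hint Y hY
  have hA : NullMeasurableSet {ω | (X + Y) ω ≤ quantile μ α (X + Y)} μ :=
    (hiX.add hiY).aestronglyMeasurable.nullMeasurableSet_le aestronglyMeasurable_const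
  have hXA := setIntegral_setOf_le_sub_le hiX (quantile μ α X) hA
  have hYA := setIntegral_setOf_le_sub_le hiY (quantile μ α Y) hA
  simp only [Measure.real, hq X hX, hq Y hY, hq _ hXY] at hXA hYA
  unfold cvar condExpEvent
  rw [hq X hX, hq Y hY, hq _ hXY, integral_add' hiX.integrableOn hiY.integrableOn,
    ← neg_add, neg_le_neg_iff, ← add_div]
  exact div_le_div_of_nonneg_right (by linarith) hα

/-- Subadditivity of CVaR: for `X, Y ∈ M` with `X + Y ∈ M`, `ρ(X+Y) ≤ ρ(X) + ρ(Y)`. -/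
theorem stmt2 {Ω : Type*} [MeasurableSpace Ω] (μ : Measure Ω) [IsProbabilityMeasure μ]
    (α : ℝ) (hα : α ∈ Set.Ioo (0 : ℝ) 1)
    (M : Set (Ω → ℝ))
    (hadd : ∀ X ∈ M, ∀ Y ∈ M, X + Y ∈ M)
    (hsmul : ∀ X ∈ M, ∀ h : ℝ, 0 < h → (fun ω => h * X ω) ∈ M)
    (htrans : ∀ X ∈ M, ∀ a : ℝ, (fun ω => X ω + a) ∈ M)
    (hmeas : ∀ X ∈ M, Measurable X)
    (hint : ∀ X ∈ M, Integrable X μ)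
    (hq : ∀ X ∈ M, (μ {ω | X ω ≤ quantile μ α X}).toReal = α)
    (X Y : Ω → ℝ) (hX : X ∈ M) (hY : Y ∈ M) (hXY : X + Y ∈ M) :
    cvar μ α (X + Y) ≤ cvar μ α X + cvar μ α Y :=
  stmt2_general μ α M hint hq X Y hX hY hXY
end

section
/- If φ is a conditional density of X₁ given (X₂, …, X_d) and u = (u₁, …, u_d) is a weight vector with u₁ ≠ 0, then the function t ↦ |u₁|⁻¹ · E[φ(u₁⁻¹(t − Σ_{j=2}^d u_j X_j), X₂, …, X_d)] is a probability density of the random variable Σ_{i=1}^d u_i X_i. -/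
/-!
Taking `A = ℝ` in the defining identity shows that `∫ φ(t, y) dt = 1` for almost every value `y`
of `Y = (X₂, …, X_d)`. The inner integrals are therefore finite, the identity lifts from real
numbers to `ℝ≥0∞`, and the joint law of `(Y, X₁)` is the measure with density `φ(t, y)` with
respect to `law(Y) ⊗ Lebesgue`. The law of `u₁X₁ + Σ uⱼXⱼ` follows by Tonelli and the
substitution `t = u₁⁻¹(s - Σ uⱼyⱼ)` in the inner integral.
-/

open MeasureTheory
open scoped ENNReal

/-- `φ : ℝ → (Fin m → ℝ) → ℝ` is a conditional density of `X₁` given the vector `Y`: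
for all Borel `A ⊆ ℝ`, `B ⊆ ℝ^m`,
`P(X₁ ∈ A, Y ∈ B) = E[1_{Y ∈ B} ∫_A φ(t, Y) dt]`. -/
def IsCondDensity {Ω : Type*} [MeasurableSpace Ω] (μ : Measure Ω)
    {m : ℕ} (X1 : Ω → ℝ) (Y : Ω → (Fin m → ℝ)) (φ : ℝ → (Fin m → ℝ) → ℝ) : Prop :=
  Measurable (Function.uncurry φ) ∧ (∀ t x, 0 ≤ φ t x) ∧
    ∀ A : Set ℝ, MeasurableSet A → ∀ B : Set (Fin m → ℝ), MeasurableSet B →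
      (μ {ω | X1 ω ∈ A ∧ Y ω ∈ B}).toReal
        = ∫ ω in {ω | Y ω ∈ B}, ∫ t in A, φ t (Y ω) ∂(volume) ∂μ

lemma setLIntegral_preimage_mul_add {a : ℝ} (ha : a ≠ 0) (c : ℝ) (g : ℝ → ℝ≥0∞) {A : Set ℝ}
    (hA : MeasurableSet A) :
    ∫⁻ t in (fun t => a * t + c) ⁻¹' A, g t
      = ∫⁻ s in A, ENNReal.ofReal |a|⁻¹ * g (a⁻¹ * (s - c)) := by
  have himage : (fun s => a⁻¹ * (s - c)) '' A = (fun t => a * t + c) ⁻¹' A :=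
    congrFun (Set.image_eq_preimage_of_inverse (fun s => by field_simp; ring)
      (fun t => by field_simp; ring)) A
  have hderiv : ∀ s ∈ A, HasDerivWithinAt (fun s => a⁻¹ * (s - c)) a⁻¹ A s := fun s _ => by
    simpa using (((hasDerivAt_id' s).sub_const c).const_mul a⁻¹).hasDerivWithinAt
  rw [← himage, lintegral_image_eq_lintegral_abs_deriv_mul hA hderiv
    (fun s _ s' _ h => by simpa [ha] using h), abs_inv]

lemma toReal_measure_eq_setIntegral_toReal {α β : Type*} [MeasurableSpace α] [MeasurableSpace β]
    {μ : Measure α} [IsFiniteMeasure μ] {ν : Measure β} {s : Set α} {p : β → ℝ≥0∞}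
    (hp : Measurable p) {A : Set β} (h : μ s = ∫⁻ t in A, p t ∂ν) :
    (μ s).toReal = ∫ t in A, (p t).toReal ∂ν := by
  rw [h, integral_toReal hp.aemeasurable (ae_lt_top hp (h ▸ measure_ne_top μ s))]

lemma ae_eq_one_of_measure_toReal_eq_setIntegral {α : Type*} [MeasurableSpace α] {ν : Measure α}
    [IsFiniteMeasure ν] {G : α → ℝ≥0∞}
    (h : ∀ B, MeasurableSet B → (ν B).toReal = ∫ y in B, (G y).toReal ∂ν) :
    ∀ᵐ y ∂ν, G y = 1 := by
  rcases eq_zero_or_neZero ν with rfl | hν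
  · simp
  have hint : Integrable (fun y => (G y).toReal) ν := by
    by_contra hni
    have := h Set.univ MeasurableSet.univ
    rw [Measure.restrict_univ, integral_undef hni, ENNReal.toReal_eq_zero_iff] at this
    simp_all
  have hG1 : (fun y => (G y).toReal) =ᵐ[ν] fun _ => 1 :=
    ae_eq_of_forall_setIntegral_eq_of_sigmaFinite (fun _ _ _ => hint.integrableOn)
      (fun _ _ _ => (integrable_const 1).integrableOn)
      fun B hB _ => by rw [← h B hB, setIntegral_const, smul_eq_mul, mul_one, Measure.real]
  filter_upwards [hG1] with y hy using (ENNReal.toReal_eq_one_iff _).1 hy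

namespace IsCondDensity

variable {Ω : Type*} [MeasurableSpace Ω] {μ : Measure Ω} {m : ℕ} {X1 : Ω → ℝ}
  {Y : Ω → (Fin m → ℝ)} {φ : ℝ → (Fin m → ℝ) → ℝ}

lemma measurable_ofReal (hφ : IsCondDensity μ X1 Y φ) :
    Measurable fun p : ℝ × (Fin m → ℝ) => ENNReal.ofReal (φ p.1 p.2) :=
  ENNReal.measurable_ofReal.comp hφ.1

lemma measure_toReal_eq_setIntegral (hφ : IsCondDensity μ X1 Y φ) (hY : Measurable Y)
    {A : Set ℝ} (hA : MeasurableSet A) {B : Set (Fin m → ℝ)} (hB : MeasurableSet B) :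
    (μ {ω | X1 ω ∈ A ∧ Y ω ∈ B}).toReal
      = ∫ y in B, (∫⁻ t in A, ENNReal.ofReal (φ t y)).toReal ∂μ.map Y := by
  have hF : Measurable fun y => ∫⁻ t in A, ENNReal.ofReal (φ t y) :=
    hφ.measurable_ofReal.lintegral_prod_left'
  rw [hφ.2.2 A hA B hB, setIntegral_map hB hF.ennreal_toReal.aestronglyMeasurable
    hY.aemeasurable]
  refine setIntegral_congr_fun (hY hB) fun ω _ => integral_eq_lintegral_of_nonneg_ae
    (.of_forall fun t => hφ.2.1 t _) ?_
  exact (hφ.1.comp (measurable_id.prodMk measurable_const)).aestronglyMeasurable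

lemma ae_lintegral_eq_one [IsFiniteMeasure μ] (hφ : IsCondDensity μ X1 Y φ) (hY : Measurable Y) :
    ∀ᵐ y ∂μ.map Y, ∫⁻ t, ENNReal.ofReal (φ t y) = 1 := by
  refine ae_eq_one_of_measure_toReal_eq_setIntegral fun B hB => ?_
  have h := hφ.measure_toReal_eq_setIntegral hY .univ hB
  simp only [Set.mem_univ, true_and, Measure.restrict_univ] at h
  rwa [Measure.map_apply hY hB]

lemma measure_eq_setLIntegral [IsFiniteMeasure μ] (hφ : IsCondDensity μ X1 Y φ)
    (hY : Measurable Y) {A : Set ℝ} (hA : MeasurableSet A) {B : Set (Fin m → ℝ)}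
    (hB : MeasurableSet B) :
    μ {ω | X1 ω ∈ A ∧ Y ω ∈ B}
      = ∫⁻ y in B, ∫⁻ t in A, ENNReal.ofReal (φ t y) ∂volume ∂μ.map Y := by
  set F : (Fin m → ℝ) → ℝ≥0∞ := fun y => ∫⁻ t in A, ENNReal.ofReal (φ t y)
  have hF_le : ∀ᵐ y ∂μ.map Y, F y ≤ 1 := by
    filter_upwards [hφ.ae_lintegral_eq_one hY] with y hy
    exact hy ▸ setLIntegral_le_lintegral A _
  have hF_fin : ∫⁻ y in B, F y ∂μ.map Y ≠ ∞ := by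
    refine ne_top_of_le_ne_top (measure_ne_top (μ.map Y) Set.univ) ?_
    calc ∫⁻ y in B, F y ∂μ.map Y ≤ ∫⁻ y, F y ∂μ.map Y := setLIntegral_le_lintegral B _
      _ ≤ ∫⁻ _, 1 ∂μ.map Y := lintegral_mono_ae hF_le
      _ = μ.map Y Set.univ := lintegral_one
  rw [← ENNReal.toReal_eq_toReal_iff' (measure_ne_top μ _) hF_fin,
    hφ.measure_toReal_eq_setIntegral hY hA hB]
  refine integral_toReal (hφ.measurable_ofReal.lintegral_prod_left').aemeasurable ?_
  filter_upwards [ae_restrict_of_ae hF_le] with y hy using hy.trans_lt ENNReal.one_lt_top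

lemma map_prodMk_eq_withDensity [IsFiniteMeasure μ] (hφ : IsCondDensity μ X1 Y φ)
    (hX1 : Measurable X1) (hY : Measurable Y) :
    μ.map (fun ω => (Y ω, X1 ω))
      = ((μ.map Y).prod volume).withDensity fun p => ENNReal.ofReal (φ p.2 p.1) := by
  set ρ := ((μ.map Y).prod volume).withDensity fun p => ENNReal.ofReal (φ p.2 p.1)
  have hpair : Measurable fun ω => (Y ω, X1 ω) := hY.prodMk hX1
  have hrect : ∀ ⦃B : Set (Fin m → ℝ)⦄, MeasurableSet B → ∀ ⦃A : Set ℝ⦄, MeasurableSet A →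
      μ.map (fun ω => (Y ω, X1 ω)) (B ×ˢ A) = ρ (B ×ˢ A) := by
    intro B hB A hA
    rw [Measure.map_apply hpair (hB.prod hA), withDensity_apply _ (hB.prod hA),
      setLIntegral_prod (fun p => ENNReal.ofReal (φ p.2 p.1))
        (hφ.measurable_ofReal.comp measurable_swap).aemeasurable,
      ← hφ.measure_eq_setLIntegral hY hA hB]
    congr 1
    ext ω
    exact and_comm
  refine ext_of_generate_finite _ generateFrom_prod.symm isPiSystem_prod ?_ ?_
  · rintro _ ⟨B, hB, A, hA, rfl⟩
    exact hrect hB hA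
  · simpa using hrect .univ .univ

end IsCondDensity

lemma measure_mul_add_mem_eq_setLIntegral {Ω β : Type*} [MeasurableSpace Ω] [MeasurableSpace β]
    {μ : Measure Ω} {ν : Measure β} [SFinite ν] {X : Ω → ℝ} {Y : Ω → β} {f : β × ℝ → ℝ≥0∞}
    (hX : Measurable X) (hY : Measurable Y) (hf : Measurable f)
    (hlaw : μ.map (fun ω => (Y ω, X ω)) = (ν.prod volume).withDensity f)
    {a : ℝ} (ha : a ≠ 0) {c : β → ℝ} (hc : Measurable c) {A : Set ℝ} (hA : MeasurableSet A) :
    μ {ω | a * X ω + c (Y ω) ∈ A}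
      = ∫⁻ s in A, ENNReal.ofReal |a|⁻¹ * ∫⁻ y, f (y, a⁻¹ * (s - c y)) ∂ν := by
  have hS : MeasurableSet {p : β × ℝ | a * p.2 + c p.1 ∈ A} :=
    ((measurable_snd.const_mul a).add (hc.comp measurable_fst)) hA
  have hg : Measurable fun p : β × ℝ => f (p.1, a⁻¹ * (p.2 - c p.1)) :=
    hf.comp (measurable_fst.prodMk (((measurable_snd.sub (hc.comp measurable_fst)).const_mul a⁻¹)))
  calc μ {ω | a * X ω + c (Y ω) ∈ A}
      = ∫⁻ p, {p : β × ℝ | a * p.2 + c p.1 ∈ A}.indicator f p ∂ν.prod volume := by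
        rw [lintegral_indicator hS, ← withDensity_apply _ hS, ← hlaw,
          Measure.map_apply (hY.prodMk hX) hS]
        rfl
    _ = ∫⁻ y, ∫⁻ t in (fun t => a * t + c y) ⁻¹' A, f (y, t) ∂volume ∂ν := by
        rw [lintegral_prod _ (hf.indicator hS).aemeasurable]
        congr with y
        rw [← lintegral_indicator (((measurable_const_mul a).add_const (c y)) hA)]
        rfl
    _ = ∫⁻ y, ∫⁻ s in A, ENNReal.ofReal |a|⁻¹ * f (y, a⁻¹ * (s - c y)) ∂volume ∂ν := by
        simp_rw [setLIntegral_preimage_mul_add ha _ _ hA]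
    _ = ∫⁻ s in A, ∫⁻ y, ENNReal.ofReal |a|⁻¹ * f (y, a⁻¹ * (s - c y)) ∂ν :=
        lintegral_lintegral_swap (measurable_const.mul hg).aemeasurable
    _ = _ := by
        congr with s
        exact lintegral_const_mul _ (hg.comp (measurable_id.prodMk measurable_const))

theorem stmt5_general {Ω : Type*} [MeasurableSpace Ω] (μ : Measure Ω) [IsProbabilityMeasure μ]
    (m : ℕ) (X1 : Ω → ℝ) (Y : Ω → (Fin m → ℝ)) (hX1 : Measurable X1) (hY : Measurable Y)
    (φ : ℝ → (Fin m → ℝ) → ℝ) (hφ : IsCondDensity μ X1 Y φ)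
    (u1 : ℝ) (hu1 : u1 ≠ 0) (u : Fin m → ℝ) :
    ∀ A : Set ℝ, MeasurableSet A →
      (μ {ω | u1 * X1 ω + ∑ i, u i * Y ω i ∈ A}).toReal
        = ∫ t in A, |u1|⁻¹ * ∫ ω, φ (u1⁻¹ * (t - ∑ i, u i * Y ω i)) (Y ω) ∂μ ∂(volume) := by
  intro A hA
  set c : (Fin m → ℝ) → ℝ := fun y => ∑ i, u i * y i
  set g : (Fin m → ℝ) × ℝ → ℝ≥0∞ := fun p => ENNReal.ofReal (φ (u1⁻¹ * (p.2 - c p.1)) p.1)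
  have hc : Measurable c := by fun_prop
  have hg : Measurable g := hφ.measurable_ofReal.comp
    (((measurable_snd.sub (hc.comp measurable_fst)).const_mul u1⁻¹).prodMk measurable_fst)
  have hdensity : ∀ t, |u1|⁻¹ * ∫ ω, φ (u1⁻¹ * (t - c (Y ω))) (Y ω) ∂μ
      = (ENNReal.ofReal |u1|⁻¹ * ∫⁻ y, g (y, t) ∂μ.map Y).toReal := by
    intro t
    rw [lintegral_map (f := fun y => g (y, t)) (hg.comp measurable_prodMk_right) hY,
      integral_eq_lintegral_of_nonneg_ae (f := fun ω => φ (u1⁻¹ * (t - c (Y ω))) (Y ω))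
        (.of_forall fun ω => hφ.2.1 _ _)
        (hφ.1.comp ((((hc.comp hY).const_sub t).const_mul u1⁻¹).prodMk hY)).aestronglyMeasurable,
      ENNReal.toReal_mul, ENNReal.toReal_ofReal (by positivity)]
  have hlaw := measure_mul_add_mem_eq_setLIntegral hX1 hY
    (hφ.measurable_ofReal.comp measurable_swap) (hφ.map_prodMk_eq_withDensity hX1 hY) hu1 hc hA
  refine (toReal_measure_eq_setIntegral_toReal (measurable_const.mul hg.lintegral_prod_left')
    hlaw).trans ?_
  exact setIntegral_congr_fun hA fun t _ => (hdensity t).symm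

/-- If `φ` is a conditional density of `X₁` given `(X₂,…,X_d)` and `u₁ ≠ 0`, then
`t ↦ |u₁|⁻¹ E[φ(u₁⁻¹(t - Σ_{j≥2} u_j X_j), X₂,…,X_d)]` is a density of `Σ_j u_j X_j`. -/
theorem stmt5 {Ω : Type*} [MeasurableSpace Ω] (μ : Measure Ω) [IsProbabilityMeasure μ]
    (m : ℕ) (hm : 1 ≤ m)
    (X1 : Ω → ℝ) (Y : Ω → (Fin m → ℝ)) (hX1 : Measurable X1) (hY : Measurable Y)
    (φ : ℝ → (Fin m → ℝ) → ℝ) (hφ : IsCondDensity μ X1 Y φ)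
    (u1 : ℝ) (hu1 : u1 ≠ 0) (u : Fin m → ℝ) :
    ∀ A : Set ℝ, MeasurableSet A →
      (μ {ω | u1 * X1 ω + ∑ i, u i * Y ω i ∈ A}).toReal
        = ∫ t in A, |u1|⁻¹ * ∫ ω, φ (u1⁻¹ * (t - ∑ i, u i * Y ω i)) (Y ω) ∂μ ∂(volume) :=
  stmt5_general μ m X1 Y hX1 hY φ hφ u1 hu1 u
end

section
/- Under Assumption A in an open set U, the function F(z,u) = P(Σ_{i=1}^d u_i X_i ≤ z) is partially differentiable in u_i for i = 2,…,d, with jointly continuous derivative ∂F/∂u_i (z,u) = −|u₁|⁻¹ · E[X_i · φ(u₁⁻¹(z − Σ_{j=2}^d u_j X_j), X₂, …, X_d)]. -/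
open MeasureTheory
open Set Function ENNReal

/-- The weighted sum `Z(u) = u₁ X₁ + Σ_{j≥2} u_j X_j` for the weight vector `p = (u₁, (u_j))`. -/
noncomputable def Zw {Ω : Type*} {m : ℕ} (X1 : Ω → ℝ) (Y : Ω → (Fin m → ℝ))
    (p : ℝ × (Fin m → ℝ)) (ω : Ω) : ℝ :=
  p.1 * X1 ω + ∑ i, p.2 i * Y ω i

/-- The distribution function `F(z, u) = P(Z(u) ≤ z)`. -/
noncomputable def Fcdf {Ω : Type*} [MeasurableSpace Ω] (μ : Measure Ω)
    {m : ℕ} (X1 : Ω → ℝ) (Y : Ω → (Fin m → ℝ)) (z : ℝ) (p : ℝ × (Fin m → ℝ)) : ℝ :=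
  (μ {ω | Zw X1 Y p ω ≤ z}).toReal

/-- `E[φ(u₁⁻¹(t - Σ_{j≥2} u_j X_j), X₂,…,X_d)]`. -/
noncomputable def densNum {Ω : Type*} [MeasurableSpace Ω] (μ : Measure Ω)
    {m : ℕ} (Y : Ω → (Fin m → ℝ)) (φ : ℝ → (Fin m → ℝ) → ℝ)
    (t : ℝ) (p : ℝ × (Fin m → ℝ)) : ℝ :=
  ∫ ω, φ (p.1⁻¹ * (t - ∑ i, p.2 i * Y ω i)) (Y ω) ∂μ

/-- `E[X_i φ(u₁⁻¹(t - Σ_{j≥2} u_j X_j), X₂,…,X_d)]` for `i ≥ 2`. -/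
noncomputable def densNumX {Ω : Type*} [MeasurableSpace Ω] (μ : Measure Ω)
    {m : ℕ} (Y : Ω → (Fin m → ℝ)) (φ : ℝ → (Fin m → ℝ) → ℝ) (i : Fin m)
    (t : ℝ) (p : ℝ × (Fin m → ℝ)) : ℝ :=
  ∫ ω, Y ω i * φ (p.1⁻¹ * (t - ∑ j, p.2 j * Y ω j)) (Y ω) ∂μ

/-- Assumption A from the paper, on the open set `U ⊆ (ℝ∖{0}) × ℝ^{d-1}`:
(i) `t ↦ φ(t,x)` is continuous; (ii) `(t,u) ↦ E[φ(u₁⁻¹(t - Σ u_j X_j), X₂,…,X_d)]`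
is finite-valued and jointly continuous on `ℝ × U`; (iii) likewise for
`(t,u) ↦ E[X_i φ(u₁⁻¹(t - Σ u_j X_j), X₂,…,X_d)]`, `i = 2,…,d`. -/
def AssumptionA {Ω : Type*} [MeasurableSpace Ω] (μ : Measure Ω)
    {m : ℕ} (X1 : Ω → ℝ) (Y : Ω → (Fin m → ℝ)) (φ : ℝ → (Fin m → ℝ) → ℝ)
    (U : Set (ℝ × (Fin m → ℝ))) : Prop :=
  IsOpen U ∧ (∀ p ∈ U, p.1 ≠ 0) ∧
  (∀ x, Continuous fun t => φ t x) ∧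
  (∀ (t : ℝ), ∀ p ∈ U, Integrable (fun ω => φ (p.1⁻¹ * (t - ∑ i, p.2 i * Y ω i)) (Y ω)) μ) ∧
  ContinuousOn (fun q : ℝ × (ℝ × (Fin m → ℝ)) => densNum μ Y φ q.1 q.2) (Set.univ ×ˢ U) ∧
  (∀ i : Fin m, ∀ (t : ℝ), ∀ p ∈ U,
    Integrable (fun ω => Y ω i * φ (p.1⁻¹ * (t - ∑ j, p.2 j * Y ω j)) (Y ω)) μ) ∧
  (∀ i : Fin m,
    ContinuousOn (fun q : ℝ × (ℝ × (Fin m → ℝ)) => densNumX μ Y φ i q.1 q.2) (Set.univ ×ˢ U))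

namespace S10

variable {Ω : Type*} [MeasurableSpace Ω] {μ : Measure Ω} [IsProbabilityMeasure μ]
  {m : ℕ} {X1 : Ω → ℝ} {Y : Ω → (Fin m → ℝ)} {φ : ℝ → (Fin m → ℝ) → ℝ}

lemma pair_meas (h : Measurable (uncurry φ)) :
    Measurable fun q : (Fin m → ℝ) × ℝ => ENNReal.ofReal (φ q.2 q.1) :=
  ENNReal.measurable_ofReal.comp (h.comp measurable_swap)

lemma sect_meas (h : Measurable (uncurry φ)) (y : Fin m → ℝ) :
    Measurable fun t => φ t y := h.comp (measurable_id.prodMk measurable_const)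

/-- `L y = ∫⁻ φ (·, y)`. -/
noncomputable def L (φ : ℝ → (Fin m → ℝ) → ℝ) (y : Fin m → ℝ) : ℝ≥0∞ :=
  ∫⁻ t, ENNReal.ofReal (φ t y) ∂(volume)

lemma L_meas (h : Measurable (uncurry φ)) : Measurable (L φ) :=
  Measurable.lintegral_prod_right' (f := fun q : (Fin m → ℝ) × ℝ => ENNReal.ofReal (φ q.2 q.1))
    (pair_meas h)

lemma integrable_sect_iff (h : Measurable (uncurry φ)) (hpos : ∀ t x, 0 ≤ φ t x)
    (y : Fin m → ℝ) : Integrable (fun t => φ t y) volume ↔ L φ y < ⊤ := by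
  rw [L]
  constructor
  · intro hi
    have := hi.2
    rwa [hasFiniteIntegral_iff_ofReal (.of_forall fun t => hpos t y)] at this
  · intro hfin
    refine ⟨(sect_meas h y).aestronglyMeasurable, ?_⟩
    rwa [hasFiniteIntegral_iff_ofReal (.of_forall fun t => hpos t y)]
lemma ae_int (hX1 : Measurable X1) (hY : Measurable Y) (hφ : IsCondDensity μ X1 Y φ) :
    ∀ᵐ y ∂(μ.map Y), Integrable (fun t => φ t y) volume := by
  obtain ⟨hm, hpos, hid⟩ := hφ
  set B : Set (Fin m → ℝ) := {y | L φ y = ⊤} with hB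
  have hBm : MeasurableSet B := (L_meas hm) (measurableSet_singleton ⊤)
  have h0 : (μ {ω | X1 ω ∈ (univ : Set ℝ) ∧ Y ω ∈ B}).toReal
      = ∫ ω in {ω | Y ω ∈ B}, ∫ t in (univ : Set ℝ), φ t (Y ω) ∂(volume) ∂μ :=
    hid univ MeasurableSet.univ B hBm
  have hzero : ∀ ω ∈ {ω | Y ω ∈ B}, (∫ t in (univ : Set ℝ), φ t (Y ω) ∂(volume)) = 0 := by
    intro ω (hω : Y ω ∈ B)
    rw [Measure.restrict_univ, integral_undef]
    rw [integrable_sect_iff hm hpos]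
    exact fun hc => absurd hω (by simp [hB, hc.ne])
  have hsets : {ω | Y ω ∈ B} = Y ⁻¹' B := rfl
  rw [hsets] at h0 hzero
  rw [setIntegral_congr_fun (hY hBm) hzero, integral_zero] at h0
  have hμB : μ {ω | Y ω ∈ B} = 0 := by
    have h2 : μ {ω | X1 ω ∈ (univ : Set ℝ) ∧ Y ω ∈ B} = μ (Y ⁻¹' B) := by simp [Set.preimage]
    rw [h2] at h0
    show μ (Y ⁻¹' B) = 0
    exact (ENNReal.toReal_eq_zero_iff _).1 h0 |>.resolve_right (measure_ne_top μ _)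
  have hν : (μ.map Y) B = 0 := by rw [Measure.map_apply hY hBm]; exact hμB
  filter_upwards [ae_iff.2 (by simpa [hB] using hν : (μ.map Y) {y | ¬ L φ y < ⊤} = 0)] with y hy
  exact (integrable_sect_iff hm hpos y).2 hy

lemma M_int (hX1 : Measurable X1) (hY : Measurable Y) (hφ : IsCondDensity μ X1 Y φ) :
    Integrable (fun y => ∫ t, φ t y) (μ.map Y) ∧ (∫ y, (∫ t, φ t y) ∂(μ.map Y)) = 1 := by
  obtain ⟨hm, hpos, hid⟩ := hφ
  have hMsm : StronglyMeasurable fun y : Fin m → ℝ => ∫ t, φ t y :=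
    (hm.comp measurable_swap).stronglyMeasurable.integral_prod_right'
  have h1 : (μ (univ : Set Ω)).toReal = ∫ ω, (∫ t, φ t (Y ω)) ∂μ := by
    have := hid univ MeasurableSet.univ univ MeasurableSet.univ
    simpa using this
  rw [measure_univ, ENNReal.toReal_one] at h1
  have hmap : ∫ y, (∫ t, φ t y) ∂(μ.map Y) = ∫ ω, (∫ t, φ t (Y ω)) ∂μ :=
    integral_map hY.aemeasurable hMsm.aestronglyMeasurable
  have hint : Integrable (fun y => ∫ t, φ t y) (μ.map Y) := by
    by_contra hc
    rw [integral_undef hc] at hmap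
    rw [← hmap] at h1
    norm_num at h1
  exact ⟨hint, by rw [hmap, ← h1]⟩

lemma L_total (hX1 : Measurable X1) (hY : Measurable Y) (hφ : IsCondDensity μ X1 Y φ) :
    ∫⁻ y, L φ y ∂(μ.map Y) = 1 := by
  obtain ⟨hint, hval⟩ := M_int hX1 hY hφ
  have hnn : 0 ≤ᵐ[μ.map Y] fun y => ∫ t, φ t y :=
    .of_forall fun y => integral_nonneg fun t => hφ.2.1 t y
  have h2 := ofReal_integral_eq_lintegral_ofReal hint hnn
  rw [hval] at h2
  have h3 : ∫⁻ y, L φ y ∂(μ.map Y) = ∫⁻ y, ENNReal.ofReal (∫ t, φ t y) ∂(μ.map Y) := by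
    refine lintegral_congr_ae ?_
    filter_upwards [ae_int hX1 hY hφ] with y hy
    rw [L, ← ofReal_integral_eq_lintegral_ofReal hy (.of_forall fun t => hφ.2.1 t y)]
  rw [h3, ← h2, ENNReal.ofReal_one]

/-- The joint law written via the conditional density. -/
noncomputable def rho (μ : Measure Ω) (Y : Ω → (Fin m → ℝ)) (φ : ℝ → (Fin m → ℝ) → ℝ) :
    Measure ((Fin m → ℝ) × ℝ) :=
  ((μ.map Y).prod volume).withDensity fun q => ENNReal.ofReal (φ q.2 q.1)

lemma rho_apply (hm : Measurable (uncurry φ)) {S : Set ((Fin m → ℝ) × ℝ)}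
    (hS : MeasurableSet S) :
    rho μ Y φ S = ∫⁻ y, (∫⁻ t in {t | (y, t) ∈ S}, ENNReal.ofReal (φ t y)) ∂(μ.map Y) := by
  rw [rho, withDensity_apply _ hS]
  rw [← lintegral_indicator hS]
  rw [MeasureTheory.lintegral_prod _ ((pair_meas hm).indicator hS).aemeasurable]
  congr 1
  ext y
  rw [show {t | (y, t) ∈ S} = Prod.mk y ⁻¹' S from rfl,
    ← lintegral_indicator (measurable_prodMk_left hS)]
  refine lintegral_congr fun t => ?_
  by_cases h : (y, t) ∈ S <;> simp [h, Set.indicator]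

lemma rho_univ (hX1 : Measurable X1) (hY : Measurable Y) (hφ : IsCondDensity μ X1 Y φ) :
    rho μ Y φ univ = 1 := by
  rw [rho_apply hφ.1 MeasurableSet.univ]
  simp only [Set.mem_univ, Set.setOf_true, Measure.restrict_univ]
  exact L_total hX1 hY hφ

lemma map_eq (hX1 : Measurable X1) (hY : Measurable Y) (hφ : IsCondDensity μ X1 Y φ) :
    μ.map (fun ω => (Y ω, X1 ω)) = rho μ Y φ := by
  obtain ⟨hm, hpos, hid⟩ := hφ
  have hfin : IsFiniteMeasure (rho μ Y φ) :=
    ⟨by rw [rho_univ hX1 hY ⟨hm, hpos, hid⟩]; exact ENNReal.one_lt_top⟩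
  have hYX : Measurable fun ω => (Y ω, X1 ω) := hY.prodMk hX1
  refine MeasureTheory.ext_of_generate_finite _ generateFrom_prod.symm isPiSystem_prod ?_ ?_
  · rintro s ⟨B, hB, A, hA, rfl⟩
    simp only [Set.mem_setOf_eq] at hB hA
    -- map side
    have hmap : (μ.map fun ω => (Y ω, X1 ω)) (B ×ˢ A) = μ {ω | X1 ω ∈ A ∧ Y ω ∈ B} := by
      rw [Measure.map_apply hYX (hB.prod hA)]
      congr 1
      ext ω
      simp [Set.mem_prod, and_comm]
    -- rho side
    have hrho : rho μ Y φ (B ×ˢ A)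
        = ∫⁻ y in B, (∫⁻ t in A, ENNReal.ofReal (φ t y)) ∂(μ.map Y) := by
      rw [rho, withDensity_apply _ (hB.prod hA), ← Measure.prod_restrict,
        MeasureTheory.lintegral_prod _ (pair_meas hm).aemeasurable]
    -- strong measurability of y ↦ ∫ t in A, φ t y
    have hind : Measurable fun q : (Fin m → ℝ) × ℝ =>
        ((univ : Set (Fin m → ℝ)) ×ˢ A).indicator (fun q : (Fin m → ℝ) × ℝ => φ q.2 q.1) q :=
      (hm.comp measurable_swap).indicator (MeasurableSet.univ.prod hA)
    have hgA : StronglyMeasurable fun y => ∫ t in A, φ t y := by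
      have : (fun y => ∫ t in A, φ t y) = fun y => ∫ t,
          ((univ : Set (Fin m → ℝ)) ×ˢ A).indicator (fun q : (Fin m → ℝ) × ℝ => φ q.2 q.1)
            (y, t) := by
        ext y
        rw [← integral_indicator hA]
        congr 1
        ext t
        by_cases h : t ∈ A <;> simp [h, Set.indicator]
      rw [this]
      exact hind.stronglyMeasurable.integral_prod_right'
    -- identity chain
    have step1 : (μ {ω | X1 ω ∈ A ∧ Y ω ∈ B}).toReal
        = ∫ y in B, (∫ t in A, φ t y) ∂(μ.map Y) := by
      rw [hid A hA B hB]
      have hsets : {ω | Y ω ∈ B} = Y ⁻¹' B := rfl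
      rw [hsets, ← setIntegral_map hB hgA.aestronglyMeasurable hY.aemeasurable]
    have step2 : ∫ y in B, (∫ t in A, φ t y) ∂(μ.map Y)
        = (∫⁻ y in B, (∫⁻ t in A, ENNReal.ofReal (φ t y)) ∂(μ.map Y)).toReal := by
      rw [integral_eq_lintegral_of_nonneg_ae
        (Filter.Eventually.of_forall fun y => integral_nonneg fun t => hpos t y)
        (hgA.aestronglyMeasurable.restrict)]
      congr 1
      refine lintegral_congr_ae ?_
      filter_upwards [ae_restrict_of_ae (ae_int hX1 hY ⟨hm, hpos, hid⟩)] with y hy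
      rw [← ofReal_integral_eq_lintegral_ofReal hy.integrableOn
        (.of_forall fun t => hpos t y)]
    have hfin1 : (μ.map fun ω => (Y ω, X1 ω)) (B ×ˢ A) ≠ ⊤ := measure_ne_top _ _
    have hfin2 : rho μ Y φ (B ×ˢ A) ≠ ⊤ := measure_ne_top _ _
    rw [← ENNReal.toReal_eq_toReal_iff' hfin1 hfin2, hmap, hrho, step1, step2]
  · rw [rho_univ hX1 hY ⟨hm, hpos, hid⟩, Measure.map_apply hYX MeasurableSet.univ]
    simp

lemma ae_L_lt_top (hX1 : Measurable X1) (hY : Measurable Y) (hφ : IsCondDensity μ X1 Y φ) :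
    ∀ᵐ y ∂(μ.map Y), L φ y < ⊤ :=
  ae_lt_top (L_meas hφ.1) (by rw [L_total hX1 hY hφ]; exact ENNReal.one_ne_top)

lemma inner_meas (hm : Measurable (uncurry φ)) {S : Set ((Fin m → ℝ) × ℝ)}
    (hS : MeasurableSet S) :
    Measurable fun y => ∫⁻ t in {t | (y, t) ∈ S}, ENNReal.ofReal (φ t y) := by
  have : (fun y => ∫⁻ t in {t | (y, t) ∈ S}, ENNReal.ofReal (φ t y))
      = fun y => ∫⁻ t, S.indicator (fun q : (Fin m → ℝ) × ℝ => ENNReal.ofReal (φ q.2 q.1)) (y, t) := by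
    ext y
    rw [show {t | (y, t) ∈ S} = Prod.mk y ⁻¹' S from rfl,
      ← lintegral_indicator (measurable_prodMk_left hS)]
    refine lintegral_congr fun t => ?_
    by_cases h : (y, t) ∈ S <;> simp [h, Set.indicator]
  rw [this]
  exact Measurable.lintegral_prod_right' ((pair_meas hm).indicator hS)

lemma inner_le_L {S : Set ((Fin m → ℝ) × ℝ)} (y : Fin m → ℝ) :
    (∫⁻ t in {t | (y, t) ∈ S}, ENNReal.ofReal (φ t y)) ≤ L φ y :=
  setLIntegral_le_lintegral _ _

lemma Sz_meas (p : ℝ × (Fin m → ℝ)) (z : ℝ) :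
    MeasurableSet {q : (Fin m → ℝ) × ℝ | p.1 * q.2 + ∑ j, p.2 j * q.1 j ≤ z} := by
  have : Measurable fun q : (Fin m → ℝ) × ℝ => p.1 * q.2 + ∑ j, p.2 j * q.1 j := by
    refine (measurable_const.mul measurable_snd).add ?_
    exact Finset.measurable_sum _ fun j _ => measurable_const.mul
      ((measurable_pi_apply j).comp measurable_fst)
  exact measurableSet_le this measurable_const

lemma Fcdf_repr (hX1 : Measurable X1) (hY : Measurable Y) (hφ : IsCondDensity μ X1 Y φ)
    (z : ℝ) (p : ℝ × (Fin m → ℝ)) :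
    Fcdf μ X1 Y z p
      = ∫ y, (∫⁻ t in {t | p.1 * t + ∑ j, p.2 j * y j ≤ z},
          ENNReal.ofReal (φ t y)).toReal ∂(μ.map Y) := by
  set S := {q : (Fin m → ℝ) × ℝ | p.1 * q.2 + ∑ j, p.2 j * q.1 j ≤ z} with hSdef
  have hS : MeasurableSet S := Sz_meas p z
  have h1 : {ω | Zw X1 Y p ω ≤ z} = (fun ω => (Y ω, X1 ω)) ⁻¹' S := rfl
  have h2 : μ {ω | Zw X1 Y p ω ≤ z} = rho μ Y φ S := by
    rw [h1, ← Measure.map_apply (hY.prodMk hX1) hS, map_eq hX1 hY hφ]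
  rw [Fcdf, h2, rho_apply hφ.1 hS]
  rw [← integral_toReal ((inner_meas hφ.1 hS).aemeasurable) ?_]
  · rfl
  · filter_upwards [ae_L_lt_top hX1 hY hφ] with y hy
    exact lt_of_le_of_lt (inner_le_L y) hy

lemma toReal_setLIntegral (hm : Measurable (uncurry φ)) (hpos : ∀ t x, 0 ≤ φ t x)
    {y : Fin m → ℝ} (hint : Integrable (fun t => φ t y) volume) (A : Set ℝ) :
    (∫⁻ t in A, ENNReal.ofReal (φ t y)).toReal = ∫ t in A, φ t y := by
  rw [← ofReal_integral_eq_lintegral_ofReal hint.integrableOn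
    (.of_forall fun t => hpos t y)]
  exact ENNReal.toReal_ofReal (integral_nonneg fun t => hpos t y)

lemma sum_update (p2 : Fin m → ℝ) (i : Fin m) (r : ℝ) (y : Fin m → ℝ) :
    ∑ j, Function.update p2 i r j * y j
      = r * y i + ∑ j ∈ Finset.univ.erase i, p2 j * y j := by
  rw [← Finset.add_sum_erase _ _ (Finset.mem_univ i), Function.update_self]
  congr 1
  refine Finset.sum_congr rfl fun j hj => ?_
  rw [Function.update_of_ne (Finset.ne_of_mem_erase hj)]

lemma set_pos {p1 : ℝ} (hp : 0 < p1) (w z : ℝ) :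
    {t : ℝ | p1 * t + w ≤ z} = Iic (p1⁻¹ * (z - w)) := by
  ext t
  simp only [mem_Iic, mem_setOf_eq, inv_mul_eq_div, le_div_iff₀ hp]
  constructor <;> intro h <;> nlinarith

lemma set_neg {p1 : ℝ} (hp : p1 < 0) (w z : ℝ) :
    {t : ℝ | p1 * t + w ≤ z} = Ici (p1⁻¹ * (z - w)) := by
  ext t
  simp only [mem_Ici, mem_setOf_eq, inv_mul_eq_div, div_le_iff_of_neg hp]
  constructor <;> intro h <;> nlinarith

lemma Ici_diff {f : ℝ → ℝ} (hf : Integrable f volume) (a b : ℝ) :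
    (∫ t in Ici b, f t) - ∫ t in Ici a, f t = -∫ t in a..b, f t := by
  have h1 : ∀ c : ℝ, (∫ t in Ici c, f t) = (∫ t, f t) - ∫ t in Iic c, f t := by
    intro c
    rw [← intervalIntegral.integral_Iio_add_Ici hf.integrableOn hf.integrableOn (b := c),
      integral_Iic_eq_integral_Iio]
    ring
  rw [h1, h1, ← intervalIntegral.integral_Iic_sub_Iic hf.integrableOn hf.integrableOn]
  ring

lemma ptwise (hm : Measurable (uncurry φ)) (hpos : ∀ t x, 0 ≤ φ t x)
    {y : Fin m → ℝ} (hint : Integrable (fun t => φ t y) volume)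
    {p : ℝ × (Fin m → ℝ)} (hp : p.1 ≠ 0) (z : ℝ) (i : Fin m) (s s' : ℝ) :
    (∫⁻ t in {t | p.1 * t + ∑ j, Function.update p.2 i s' j * y j ≤ z},
        ENNReal.ofReal (φ t y)).toReal
      - (∫⁻ t in {t | p.1 * t + ∑ j, Function.update p.2 i s j * y j ≤ z},
        ENNReal.ofReal (φ t y)).toReal
      = -(|p.1|⁻¹) * ∫ r in s..s',
          y i * φ (p.1⁻¹ * (z - ∑ j, Function.update p.2 i r j * y j)) y := by
  set R := ∑ j ∈ Finset.univ.erase i, p.2 j * y j with hR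
  set α := -(p.1⁻¹ * y i) with hα
  set β := p.1⁻¹ * (z - R) with hβ
  have hsum : ∀ r : ℝ, ∑ j, Function.update p.2 i r j * y j = r * y i + R :=
    fun r => sum_update p.2 i r y
  have hc : ∀ r : ℝ, p.1⁻¹ * (z - ∑ j, Function.update p.2 i r j * y j) = α * r + β := by
    intro r; rw [hsum, hα, hβ]; ring
  have hRHS : (∫ r in s..s',
        y i * φ (p.1⁻¹ * (z - ∑ j, Function.update p.2 i r j * y j)) y)
      = y i * ∫ r in s..s', φ (α * r + β) y := by
    simp_rw [hc]
    rw [intervalIntegral.integral_const_mul]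
  by_cases hy : y i = 0
  · have hsets : ∀ r : ℝ, {t : ℝ | p.1 * t + ∑ j, Function.update p.2 i r j * y j ≤ z}
        = {t : ℝ | p.1 * t + R ≤ z} := by
      intro r; ext t; rw [Set.mem_setOf_eq, hsum, hy]; simp
    rw [hsets s, hsets s', sub_self, hRHS, hy, zero_mul, mul_zero]
  have hα0 : α ≠ 0 := by
    rw [hα]
    simp only [neg_ne_zero]
    exact mul_ne_zero (inv_ne_zero hp) hy
  have hcomp : (∫ t in (α * s + β)..(α * s' + β), φ t y)
      = α * ∫ r in s..s', φ (α * r + β) y := by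
    rw [intervalIntegral.integral_comp_mul_add (fun t => φ t y) hα0 β, smul_eq_mul,
      ← mul_assoc, mul_inv_cancel₀ hα0, one_mul]
  rcases lt_or_gt_of_ne hp with hneg | hppos
  · -- p.1 < 0 : sets are Ici
    have hsets : ∀ r : ℝ, {t : ℝ | p.1 * t + ∑ j, Function.update p.2 i r j * y j ≤ z}
        = Ici (α * r + β) := by
      intro r
      rw [set_neg hneg _ z, hc]
    rw [hsets s, hsets s',
      toReal_setLIntegral hm hpos hint, toReal_setLIntegral hm hpos hint,
      Ici_diff hint, hcomp, hRHS, abs_of_neg hneg, hα]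
    field_simp
  · -- p.1 > 0 : sets are Iic
    have hsets : ∀ r : ℝ, {t : ℝ | p.1 * t + ∑ j, Function.update p.2 i r j * y j ≤ z}
        = Iic (α * r + β) := by
      intro r
      rw [set_pos hppos _ z, hc]
    rw [hsets s, hsets s',
      toReal_setLIntegral hm hpos hint, toReal_setLIntegral hm hpos hint,
      intervalIntegral.integral_Iic_sub_Iic hint.integrableOn hint.integrableOn, hcomp, hRHS,
      abs_of_pos hppos, hα]
    ring

/-- The integrand of the Fubini argument. -/
noncomputable def fI (φ : ℝ → (Fin m → ℝ) → ℝ) (p : ℝ × (Fin m → ℝ)) (i : Fin m) (z : ℝ)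
    (r : ℝ) (y : Fin m → ℝ) : ℝ :=
  y i * φ (p.1⁻¹ * (z - ∑ j, Function.update p.2 i r j * y j)) y

lemma fI_meas (hm : Measurable (uncurry φ)) (p : ℝ × (Fin m → ℝ)) (i : Fin m) (z : ℝ) :
    Measurable fun q : (Fin m → ℝ) × ℝ => fI φ p i z q.2 q.1 := by
  have hsum : Measurable fun q : (Fin m → ℝ) × ℝ => ∑ j, Function.update p.2 i q.2 j * q.1 j := by
    refine Finset.measurable_sum _ fun j _ => ?_
    by_cases h : j = i
    · subst h
      simp only [Function.update_self]
      exact measurable_snd.mul ((measurable_pi_apply j).comp measurable_fst)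
    · simp only [Function.update_of_ne h]
      exact measurable_const.mul ((measurable_pi_apply j).comp measurable_fst)
  have harg : Measurable fun q : (Fin m → ℝ) × ℝ =>
      p.1⁻¹ * (z - ∑ j, Function.update p.2 i q.2 j * q.1 j) :=
    measurable_const.mul (measurable_const.sub hsum)
  exact ((measurable_pi_apply i).comp measurable_fst).mul
    (hm.comp (harg.prodMk measurable_fst))

lemma L_toReal (hpos : ∀ t x, 0 ≤ φ t x) {y : Fin m → ℝ}
    (hint : Integrable (fun t => φ t y) volume) :
    (L φ y).toReal = ∫ t, φ t y := by
  rw [L, ← ofReal_integral_eq_lintegral_ofReal hint (.of_forall fun t => hpos t y),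
    ENNReal.toReal_ofReal (integral_nonneg fun t => hpos t y)]

lemma L_int (hX1 : Measurable X1) (hY : Measurable Y) (hφ : IsCondDensity μ X1 Y φ) :
    Integrable (fun y => (L φ y).toReal) (μ.map Y) :=
  integrable_toReal_of_lintegral_ne_top (L_meas hφ.1).aemeasurable
    (by rw [L_total hX1 hY hφ]; exact ENNReal.one_ne_top)

lemma fI_sect_int (hm : Measurable (uncurry φ)) (hpos : ∀ t x, 0 ≤ φ t x)
    {y : Fin m → ℝ} (hint : Integrable (fun t => φ t y) volume)
    {p : ℝ × (Fin m → ℝ)} (hp : p.1 ≠ 0) (i : Fin m) (z : ℝ) :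
    Integrable (fun r => fI φ p i z r y) volume := by
  set R := ∑ j ∈ Finset.univ.erase i, p.2 j * y j with hR
  set α := -(p.1⁻¹ * y i) with hα
  set β := p.1⁻¹ * (z - R) with hβ
  have hc : ∀ r : ℝ, fI φ p i z r y = y i * φ (α * r + β) y := by
    intro r
    rw [fI, sum_update]
    congr 2
    rw [hα, hβ, hR]
    ring
  simp_rw [hc]
  by_cases hy : y i = 0
  · simp [hy]
  · have hα0 : α ≠ 0 := by
      rw [hα]; simp only [neg_ne_zero]; exact mul_ne_zero (inv_ne_zero hp) hy
    have h1 : Integrable (fun x : ℝ => φ (x + β) y) volume := hint.comp_add_right β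
    exact ((integrable_comp_mul_left_iff (fun x : ℝ => φ (x + β) y) hα0).2 h1).const_mul (y i)

lemma fI_sect_bound (hm : Measurable (uncurry φ)) (hpos : ∀ t x, 0 ≤ φ t x)
    {y : Fin m → ℝ} (hint : Integrable (fun t => φ t y) volume)
    {p : ℝ × (Fin m → ℝ)} (hp : p.1 ≠ 0) (i : Fin m) (z : ℝ) {E : Set ℝ}
    (hE : MeasurableSet E) :
    (∫ r in E, ‖fI φ p i z r y‖) ≤ |p.1| * (L φ y).toReal := by
  set R := ∑ j ∈ Finset.univ.erase i, p.2 j * y j with hR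
  set α := -(p.1⁻¹ * y i) with hα
  set β := p.1⁻¹ * (z - R) with hβ
  have hc : ∀ r : ℝ, ‖fI φ p i z r y‖ = |y i| * φ (α * r + β) y := by
    intro r
    rw [fI, sum_update, Real.norm_eq_abs, abs_mul,
      abs_of_nonneg (hpos _ y)]
    congr 3
    rw [hα, hβ, hR]
    ring
  have hLnn : 0 ≤ (L φ y).toReal := ENNReal.toReal_nonneg
  by_cases hy : y i = 0
  · simp only [hc, hy, abs_zero, zero_mul, integral_zero]
    positivity
  have hα0 : α ≠ 0 := by
    rw [hα]; simp only [neg_ne_zero]; exact mul_ne_zero (inv_ne_zero hp) hy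
  have h1 : Integrable (fun x : ℝ => φ (x + β) y) volume := hint.comp_add_right β
  have h2 : Integrable (fun x : ℝ => φ (α * x + β) y) volume :=
    (integrable_comp_mul_left_iff (fun x : ℝ => φ (x + β) y) hα0).2 h1
  have h3 : (∫ r in E, ‖fI φ p i z r y‖) = |y i| * ∫ r in E, φ (α * r + β) y := by
    simp_rw [hc]
    rw [integral_const_mul]
  rw [h3]
  have h4 : (∫ r in E, φ (α * r + β) y) ≤ ∫ r, φ (α * r + β) y :=
    setIntegral_le_integral h2 (.of_forall fun r => hpos _ y)
  have h5 : (∫ r, φ (α * r + β) y) = |α⁻¹| * ∫ t, φ t y := by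
    rw [show (fun r => φ (α * r + β) y) = fun r => (fun x => φ (x + β) y) (α * r) from rfl]
    rw [MeasureTheory.Measure.integral_comp_mul_left (fun x : ℝ => φ (x + β) y) α, smul_eq_mul]
    congr 1
    exact integral_add_right_eq_self (fun x : ℝ => φ x y) β
  have h6 : |y i| * |α⁻¹| = |p.1| := by
    rw [abs_inv, hα, abs_neg, abs_mul, abs_inv]
    field_simp
  calc |y i| * ∫ r in E, φ (α * r + β) y
      ≤ |y i| * (|α⁻¹| * ∫ t, φ t y) := by
        refine mul_le_mul_of_nonneg_left (le_trans h4 (le_of_eq h5)) (abs_nonneg _)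
    _ = |p.1| * (L φ y).toReal := by
        rw [← mul_assoc, h6, L_toReal hpos hint]

lemma fI_prod_int (hX1 : Measurable X1) (hY : Measurable Y) (hφ : IsCondDensity μ X1 Y φ)
    {p : ℝ × (Fin m → ℝ)} (hp : p.1 ≠ 0) (i : Fin m) (z : ℝ) {E : Set ℝ}
    (hE : MeasurableSet E) :
    Integrable (uncurry fun y r => fI φ p i z r y)
      ((μ.map Y).prod (volume.restrict E)) := by
  obtain ⟨hm, hpos, hid⟩ := hφ
  have hmeas : AEStronglyMeasurable (uncurry fun y r => fI φ p i z r y)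
      ((μ.map Y).prod (volume.restrict E)) := by
    have := (fI_meas hm p i z).stronglyMeasurable
    exact this.aestronglyMeasurable
  rw [integrable_prod_iff hmeas]
  constructor
  · filter_upwards [ae_int hX1 hY ⟨hm, hpos, hid⟩] with y hy
    exact (fI_sect_int hm hpos hy hp i z).restrict
  · have hsm : AEStronglyMeasurable (fun y => ∫ r in E, ‖fI φ p i z r y‖ ∂volume)
        (μ.map Y) := by
      have h1 : StronglyMeasurable fun q : (Fin m → ℝ) × ℝ => ‖fI φ p i z q.2 q.1‖ :=
        ((fI_meas hm p i z).norm).stronglyMeasurable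
      exact h1.integral_prod_right'.aestronglyMeasurable
    refine Integrable.mono' ((L_int hX1 hY ⟨hm, hpos, hid⟩).const_mul |p.1|) hsm ?_
    filter_upwards [ae_int hX1 hY ⟨hm, hpos, hid⟩] with y hy
    rw [Real.norm_eq_abs, abs_of_nonneg (integral_nonneg fun r => norm_nonneg _)]
    exact fI_sect_bound hm hpos hy hp i z hE

lemma fI_int_eq (hY : Measurable Y) (hm : Measurable (uncurry φ))
    (p : ℝ × (Fin m → ℝ)) (i : Fin m) (z r : ℝ) :
    (∫ y, fI φ p i z r y ∂(μ.map Y)) = densNumX μ Y φ i z (p.1, Function.update p.2 i r) := by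
  have hg : AEStronglyMeasurable (fun y => fI φ p i z r y) (μ.map Y) :=
    ((fI_meas hm p i z).comp (measurable_id.prodMk measurable_const)).aestronglyMeasurable
  rw [integral_map hY.aemeasurable hg, densNumX]
  rfl

lemma master (hX1 : Measurable X1) (hY : Measurable Y) (hφ : IsCondDensity μ X1 Y φ)
    {p : ℝ × (Fin m → ℝ)} (hp : p.1 ≠ 0) (i : Fin m) (z : ℝ) (s s' : ℝ) :
    Fcdf μ X1 Y z (p.1, Function.update p.2 i s')
      - Fcdf μ X1 Y z (p.1, Function.update p.2 i s)
      = -(|p.1|⁻¹) * ∫ r in s..s', densNumX μ Y φ i z (p.1, Function.update p.2 i r) := by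
  obtain ⟨hm, hpos, hid⟩ := hφ
  have hφ' : IsCondDensity μ X1 Y φ := ⟨hm, hpos, hid⟩
  have hrepr : ∀ r : ℝ, Fcdf μ X1 Y z (p.1, Function.update p.2 i r)
      = ∫ y, (∫⁻ t in {t | p.1 * t + ∑ j, Function.update p.2 i r j * y j ≤ z},
          ENNReal.ofReal (φ t y)).toReal ∂(μ.map Y) := by
    intro r
    simpa using Fcdf_repr hX1 hY hφ' z (p.1, Function.update p.2 i r)
  have hIint : ∀ r : ℝ, Integrable
      (fun y => (∫⁻ t in {t | p.1 * t + ∑ j, Function.update p.2 i r j * y j ≤ z},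
        ENNReal.ofReal (φ t y)).toReal) (μ.map Y) := by
    intro r
    refine Integrable.mono' (L_int hX1 hY hφ') ?_ ?_
    · exact ((inner_meas hm (Sz_meas (p.1, Function.update p.2 i r) z)).ennreal_toReal
        ).aestronglyMeasurable
    · filter_upwards [ae_L_lt_top hX1 hY hφ'] with y hy
      rw [Real.norm_eq_abs, abs_of_nonneg ENNReal.toReal_nonneg]
      exact ENNReal.toReal_mono hy.ne (setLIntegral_le_lintegral _ _)
  rw [hrepr s', hrepr s, ← integral_sub (hIint s') (hIint s)]
  have hptw : ∫ y, ((∫⁻ t in {t | p.1 * t + ∑ j, Function.update p.2 i s' j * y j ≤ z},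
          ENNReal.ofReal (φ t y)).toReal
        - (∫⁻ t in {t | p.1 * t + ∑ j, Function.update p.2 i s j * y j ≤ z},
          ENNReal.ofReal (φ t y)).toReal) ∂(μ.map Y)
      = ∫ y, (-(|p.1|⁻¹) * ∫ r in s..s', fI φ p i z r y) ∂(μ.map Y) := by
    refine integral_congr_ae ?_
    filter_upwards [ae_int hX1 hY hφ'] with y hy
    exact ptwise hm hpos hy hp z i s s'
  rw [hptw, integral_const_mul]
  congr 1
  -- swap the integrals
  have hswap : ∀ a b : ℝ, (∫ y, (∫ r in Ioc a b, fI φ p i z r y) ∂(μ.map Y))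
      = ∫ r in Ioc a b, (∫ y, fI φ p i z r y ∂(μ.map Y)) := by
    intro a b
    exact integral_integral_swap (fI_prod_int hX1 hY hφ' hp i z measurableSet_Ioc)
  have hdens : ∀ a b : ℝ, (∫ r in Ioc a b, (∫ y, fI φ p i z r y ∂(μ.map Y)))
      = ∫ r in Ioc a b, densNumX μ Y φ i z (p.1, Function.update p.2 i r) := by
    intro a b
    refine setIntegral_congr_fun measurableSet_Ioc fun r _ => ?_
    exact fI_int_eq hY hm p i z r
  rcases le_total s s' with h | h
  · simp_rw [intervalIntegral.integral_of_le h]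
    rw [hswap, hdens]
  · simp_rw [intervalIntegral.integral_of_ge h]
    rw [integral_neg, hswap, hdens]

end S10

/-- Under Assumption A, `F(z,u) = P(Σ u_i X_i ≤ z)` is partially differentiable in `u_i`,
`i = 2,…,d`, with jointly continuous derivative
`∂F/∂u_i = -|u₁|⁻¹ E[X_i φ(u₁⁻¹(z - Σ_{j≥2} u_j X_j), X₂,…,X_d)]`. -/
theorem stmt10 {Ω : Type*} [MeasurableSpace Ω] (μ : Measure Ω) [IsProbabilityMeasure μ]
    (m : ℕ) (hm : 1 ≤ m)
    (X1 : Ω → ℝ) (Y : Ω → (Fin m → ℝ)) (hX1 : Measurable X1) (hY : Measurable Y)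
    (φ : ℝ → (Fin m → ℝ) → ℝ) (hφ : IsCondDensity μ X1 Y φ)
    (U : Set (ℝ × (Fin m → ℝ))) (hA : AssumptionA μ X1 Y φ U) :
    (∀ (z : ℝ), ∀ p ∈ U, ∀ i : Fin m,
      HasDerivAt (fun s => Fcdf μ X1 Y z (p.1, Function.update p.2 i s))
        (-(|p.1|⁻¹) * densNumX μ Y φ i z p) (p.2 i)) ∧
    (∀ i : Fin m,
      ContinuousOn (fun q : ℝ × (ℝ × (Fin m → ℝ)) => -(|q.2.1|⁻¹) * densNumX μ Y φ i q.1 q.2)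
        (Set.univ ×ˢ U)) := by
  obtain ⟨hUopen, hU0, hφcont, hint1, hcont1, hint2, hcont2⟩ := hA
  constructor
  · intro z p hpU i
    have hp1 : p.1 ≠ 0 := hU0 p hpU
    set s₀ := p.2 i with hs₀
    set g : ℝ → ℝ := fun r => densNumX μ Y φ i z (p.1, Function.update p.2 i r) with hg
    have hident : ∀ s' : ℝ, Fcdf μ X1 Y z (p.1, Function.update p.2 i s')
        = Fcdf μ X1 Y z (p.1, Function.update p.2 i s₀)
          + (-(|p.1|⁻¹)) * ∫ r in s₀..s', g r := by
      intro s'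
      have := S10.master hX1 hY hφ hp1 i z s₀ s'
      linarith
    -- measurability of g
    have hgsm : StronglyMeasurable g := by
      have h1 : (fun r => ∫ y, S10.fI φ p i z r y ∂(μ.map Y)) = g := by
        funext r
        exact S10.fI_int_eq hY hφ.1 p i z r
      rw [← h1]
      have h2 : StronglyMeasurable fun q : ℝ × (Fin m → ℝ) => S10.fI φ p i z q.1 q.2 :=
        ((S10.fI_meas hφ.1 p i z).comp measurable_swap).stronglyMeasurable
      exact h2.integral_prod_right'
    -- continuity of g at s₀
    have hpath : Continuous fun r : ℝ => ((z, (p.1, Function.update p.2 i r)) :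
        ℝ × (ℝ × (Fin m → ℝ))) := by
      refine continuous_const.prodMk (continuous_const.prodMk ?_)
      exact continuous_const.update i continuous_id
    have hca : ContinuousAt (fun q : ℝ × (ℝ × (Fin m → ℝ)) => densNumX μ Y φ i q.1 q.2)
        (z, (p.1, Function.update p.2 i s₀)) := by
      rw [hs₀, Function.update_eq_self]
      exact (hcont2 i).continuousAt
        ((isOpen_univ.prod hUopen).mem_nhds ⟨Set.mem_univ z, hpU⟩)
    have hgcont : ContinuousAt g s₀ :=
      ContinuousAt.comp (f := fun r : ℝ => ((z, (p.1, Function.update p.2 i r)) :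
        ℝ × (ℝ × (Fin m → ℝ)))) hca hpath.continuousAt
    have hI : HasDerivAt (fun s' => ∫ r in s₀..s', g r) (g s₀) s₀ :=
      intervalIntegral.integral_hasDerivAt_right (IntervalIntegrable.refl)
        hgsm.stronglyMeasurableAtFilter hgcont
    have hD : HasDerivAt (fun s' => Fcdf μ X1 Y z (p.1, Function.update p.2 i s₀)
        + (-(|p.1|⁻¹)) * ∫ r in s₀..s', g r) ((-(|p.1|⁻¹)) * g s₀) s₀ :=
      (hI.const_mul _).const_add _
    have hfun : (fun s => Fcdf μ X1 Y z (p.1, Function.update p.2 i s))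
        = fun s' => Fcdf μ X1 Y z (p.1, Function.update p.2 i s₀)
          + (-(|p.1|⁻¹)) * ∫ r in s₀..s', g r := funext hident
    rw [hfun]
    have hgs₀ : g s₀ = densNumX μ Y φ i z p := by
      rw [hg, hs₀]
      simp only [Function.update_eq_self]
    rw [← hgs₀]
    exact hD
  · intro i
    intro q hq
    have hq1 : q.2.1 ≠ 0 := hU0 q.2 hq.2
    have h1 : ContinuousAt (fun q : ℝ × (ℝ × (Fin m → ℝ)) => -(|q.2.1|⁻¹)) q := by
      have habs : ContinuousAt (fun q : ℝ × (ℝ × (Fin m → ℝ)) => |q.2.1|) q :=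
        (continuous_abs.comp (continuous_fst.comp continuous_snd)).continuousAt
      exact (habs.inv₀ (by simpa using abs_ne_zero.2 hq1)).neg
    exact (h1.continuousWithinAt).mul ((hcont2 i) q hq)
end

section
/- Under Assumption A in an open set U, the function F(z,u) = P(Σ_{i=1}^d u_i X_i ≤ z) is partially differentiable in u₁ with jointly continuous derivative ∂F/∂u₁ (z,u) = −sign(u₁) u₁⁻² · E[(z − Σ_{j=2}^d u_j X_j) · φ(u₁⁻¹(z − Σ_{j=2}^d u_j X_j), X₂, …, X_d)]. -/
open MeasureTheory

/-! For `u₁ > 0` the event `{Σ uᵢ Xᵢ ≤ z}` is `{X₁ ≤ u₁⁻¹ c}` with `c = z - Σ_{j≥2} u_j X_j`;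
for `u₁ < 0` it is the complement of `{X₁ < u₁⁻¹ c}`. The law of `((X₂,…,X_d), X₁)` is the law of
`(X₂,…,X_d)` composed with the kernel `x ↦ φ(t, x) dt`, so `F = E[∫_{t ≤ u₁⁻¹ c} φ(t, X₂,…,X_d) dt]`
or one minus it. The substitution `t = r⁻¹ c` turns the difference of two such inner integrals
into `∫ -r⁻² c φ(r⁻¹ c, ·) dr` between the two values of `u₁`; the same substitution bounds this
integrand in `L¹(dr ⊗ P)` by the mass of `φ`, so Fubini moves the expectation inside. As
`r ↦ -r⁻² E[c φ(r⁻¹ c, ·)]` is continuous by Assumption A, the fundamental theorem of calculus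
gives the derivative. -/

open MeasureTheory ProbabilityTheory Set Function Filter
open scoped ENNReal Topology

section DensityKernel

variable {β : Type*} [MeasurableSpace β] {φ : ℝ → β → ℝ}

noncomputable def densityKernel (φ : ℝ → β → ℝ) : Kernel β ℝ :=
  Kernel.withDensity (Kernel.const β volume) fun x t => ENNReal.ofReal (φ t x)

instance (φ : ℝ → β → ℝ) : IsSFiniteKernel (densityKernel φ) :=
  Kernel.IsSFiniteKernel.withDensity _ fun _ _ => ENNReal.ofReal_ne_top

lemma densityKernel_apply (hφ : Measurable (uncurry φ)) (x : β) (s : Set ℝ) :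
    densityKernel φ x s = ∫⁻ t in s, ENNReal.ofReal (φ t x) := by
  rw [densityKernel, Kernel.withDensity_apply' _ (hφ.comp measurable_swap).ennreal_ofReal,
    Kernel.const_apply]

lemma toReal_densityKernel_apply (hφ : Measurable (uncurry φ)) (hφ0 : ∀ t x, 0 ≤ φ t x)
    (x : β) (s : Set ℝ) :
    (densityKernel φ x s).toReal = ∫ t in s, φ t x := by
  rw [densityKernel_apply hφ, integral_eq_lintegral_of_nonneg_ae
    (ae_of_all _ fun t => hφ0 t x) (hφ.comp measurable_prodMk_right).aestronglyMeasurable]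

end DensityKernel

namespace IsCondDensity

variable {Ω : Type*} [MeasurableSpace Ω] {μ : Measure Ω} {m : ℕ}
  {X1 : Ω → ℝ} {Y : Ω → (Fin m → ℝ)} {φ : ℝ → (Fin m → ℝ) → ℝ}

lemma toReal_measure_inter (hY : Measurable Y) (hφ : IsCondDensity μ X1 Y φ)
    {A : Set ℝ} (hA : MeasurableSet A) {B : Set (Fin m → ℝ)} (hB : MeasurableSet B) :
    (μ (Y ⁻¹' B ∩ X1 ⁻¹' A)).toReal = ∫ x in B, (densityKernel φ x A).toReal ∂(μ.map Y) := by
  obtain ⟨hφm, hφ0, hrect⟩ := hφ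
  have hκ : Measurable fun x => (densityKernel φ x A).toReal :=
    (Kernel.measurable_coe _ hA).ennreal_toReal
  rw [setIntegral_map hB hκ.aestronglyMeasurable hY.aemeasurable, inter_comm]
  simp only [toReal_densityKernel_apply hφm hφ0]
  exact hrect A hA B hB

variable [IsProbabilityMeasure μ]

lemma ae_densityKernel_univ (hY : Measurable Y) (hφ : IsCondDensity μ X1 Y φ) :
    ∀ᵐ x ∂(μ.map Y), densityKernel φ x univ = 1 := by
  have : IsProbabilityMeasure (μ.map Y) := Measure.isProbabilityMeasure_map hY.aemeasurable
  set H : (Fin m → ℝ) → ℝ := fun x => (densityKernel φ x univ).toReal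
  have hH : ∀ B, MeasurableSet B → ∫ x in B, H x ∂(μ.map Y) = (μ.map Y B).toReal := by
    intro B hB
    rw [← toReal_measure_inter hY hφ MeasurableSet.univ hB, preimage_univ, inter_univ,
      Measure.map_apply hY hB]
  have hHint : Integrable H (μ.map Y) := by
    by_contra hH'
    simpa [integral_undef hH'] using hH univ MeasurableSet.univ
  have hH1 : H =ᵐ[μ.map Y] fun _ => 1 := by
    refine ae_eq_of_forall_setIntegral_eq_of_sigmaFinite (fun _ _ _ => hHint.integrableOn)
      (fun _ _ _ => (integrable_const 1).integrableOn) fun B hB _ => ?_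
    rw [hH B hB, setIntegral_const, smul_eq_mul, mul_one, Measure.real]
  filter_upwards [hH1] with x hx
  exact (ENNReal.toReal_eq_one_iff _).mp hx

lemma map_prodMk_eq_compProd (hX1 : Measurable X1) (hY : Measurable Y)
    (hφ : IsCondDensity μ X1 Y φ) :
    μ.map (fun ω => (Y ω, X1 ω)) = μ.map Y ⊗ₘ densityKernel φ := by
  have : IsProbabilityMeasure (μ.map Y) := Measure.isProbabilityMeasure_map hY.aemeasurable
  have hY1 := hφ.ae_densityKernel_univ hY
  have huniv : (μ.map Y ⊗ₘ densityKernel φ) univ = 1 := by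
    rw [← univ_prod_univ, Measure.compProd_apply_prod MeasurableSet.univ MeasurableSet.univ,
      Measure.restrict_univ, lintegral_congr_ae hY1, lintegral_one, measure_univ]
  have : IsProbabilityMeasure (μ.map fun ω => (Y ω, X1 ω)) :=
    Measure.isProbabilityMeasure_map (hY.prodMk hX1).aemeasurable
  refine ext_of_generate_finite _ generateFrom_prod.symm isPiSystem_prod ?_ (by simp [huniv])
  rintro _ ⟨B, hB : MeasurableSet B, A, hA : MeasurableSet A, rfl⟩
  have hfin : (μ.map Y ⊗ₘ densityKernel φ) (B ×ˢ A) ≠ ∞ :=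
    ne_top_of_le_ne_top (by simp [huniv]) (measure_mono (subset_univ _))
  rw [← ENNReal.toReal_eq_toReal_iff' (measure_ne_top _ _) hfin,
    Measure.map_apply (hY.prodMk hX1) (hB.prod hA), mk_preimage_prod,
    toReal_measure_inter hY hφ hA hB, Measure.compProd_apply_prod hB hA,
    integral_toReal (Kernel.measurable_coe _ hA).aemeasurable]
  filter_upwards [ae_restrict_of_ae hY1] with x hx
  exact (measure_mono (subset_univ A)).trans_lt (hx ▸ ENNReal.one_lt_top)

lemma toReal_measure_preimage (hX1 : Measurable X1) (hY : Measurable Y)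
    (hφ : IsCondDensity μ X1 Y φ) {S : Set ((Fin m → ℝ) × ℝ)} (hS : MeasurableSet S) :
    (μ ((fun ω => (Y ω, X1 ω)) ⁻¹' S)).toReal
      = ∫ ω, (∫ t in Prod.mk (Y ω) ⁻¹' S, φ t (Y ω)) ∂μ := by
  have hκ := Kernel.measurable_kernel_prodMk_left (κ := densityKernel φ) hS
  rw [← Measure.map_apply (hY.prodMk hX1) hS, map_prodMk_eq_compProd hX1 hY hφ,
    Measure.compProd_apply hS, ← integral_toReal hκ.aemeasurable,
    integral_map hY.aemeasurable hκ.ennreal_toReal.aestronglyMeasurable]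
  · simp only [toReal_densityKernel_apply hφ.1 hφ.2.1]
  · filter_upwards [hφ.ae_densityKernel_univ hY] with x hx
    exact (measure_mono (subset_univ _)).trans_lt (hx ▸ ENNReal.one_lt_top)

end IsCondDensity

lemma lintegral_enorm_inv_sq_mul_comp_le {S : Set ℝ} (hS : MeasurableSet S) (h0 : (0 : ℝ) ∉ S)
    (c : ℝ) (g : ℝ → ℝ≥0∞) :
    ∫⁻ r in S, ‖-(r ^ 2)⁻¹ * c‖ₑ * g (r⁻¹ * c) ≤ ∫⁻ t, g t := by
  rcases eq_or_ne c 0 with rfl | hc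
  · simp
  have hderiv : ∀ r ∈ S, HasDerivWithinAt (fun r => r⁻¹ * c) (-(r ^ 2)⁻¹ * c) S r :=
    fun r hr => ((hasDerivAt_inv (ne_of_mem_of_not_mem hr h0)).mul_const c).hasDerivWithinAt
  have hinj : InjOn (fun r : ℝ => r⁻¹ * c) S :=
    fun r _ r' _ h => inv_injective (mul_right_cancel₀ hc h)
  simp only [Real.enorm_eq_ofReal_abs]
  rw [← lintegral_image_eq_lintegral_abs_deriv_mul hS hderiv hinj]
  exact setLIntegral_le_lintegral _ _

lemma integral_Iic_inv_mul_sub {f : ℝ → ℝ} (hf : Continuous f) (hfi : Integrable f) (c : ℝ)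
    {a b : ℝ} (h0 : (0 : ℝ) ∉ uIcc a b) :
    (∫ t in Iic (b⁻¹ * c), f t) - ∫ t in Iic (a⁻¹ * c), f t
      = ∫ r in a..b, -(r ^ 2)⁻¹ * c * f (r⁻¹ * c) := by
  have hderiv : ∀ r ∈ uIcc a b, HasDerivAt (fun r => r⁻¹ * c) (-(r ^ 2)⁻¹ * c) r :=
    fun r hr => (hasDerivAt_inv (ne_of_mem_of_not_mem hr h0)).mul_const c
  have hcont : ContinuousOn (fun r : ℝ => -(r ^ 2)⁻¹ * c) (uIcc a b) :=
    fun r hr => ((continuousAt_id.pow 2).inv₀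
      (pow_ne_zero 2 (ne_of_mem_of_not_mem hr h0))).neg.mul_const c |>.continuousWithinAt
  rw [intervalIntegral.integral_Iic_sub_Iic hfi.integrableOn hfi.integrableOn,
    ← intervalIntegral.integral_deriv_smul_comp hderiv hcont hf]
  rfl

theorem hasDerivAt_integral_of_sub_eq_intervalIntegral {α E : Type*} [MeasurableSpace α]
    {μ : Measure α} [SFinite μ] [NormedAddCommGroup E] [NormedSpace ℝ E] [CompleteSpace E]
    {F h : ℝ → α → E} {I : Set ℝ} {s₀ : ℝ} (hI : IsOpen I) (hs₀ : s₀ ∈ I)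
    (hF : ∀ s ∈ I, Integrable (F s) μ)
    (hFh : ∀ s ∈ I, ∀ᵐ x ∂μ, F s x - F s₀ x = ∫ r in s₀..s, h r x)
    (hh : ∀ s ∈ I, Integrable (uncurry h) ((volume.restrict (uIoc s₀ s)).prod μ))
    (hg : ContinuousOn (fun r => ∫ x, h r x ∂μ) I) :
    HasDerivAt (fun s => ∫ x, F s x ∂μ) (∫ x, h s₀ x ∂μ) s₀ := by
  have hsub : ∀ s ∈ I, ∫ x, F s x ∂μ = ∫ x, F s₀ x ∂μ + ∫ r in s₀..s, ∫ x, h r x ∂μ := by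
    intro s hs
    rw [intervalIntegral_integral_swap (hh s hs), ← integral_congr_ae (hFh s hs),
      integral_sub (hF s hs) (hF s₀ hs₀), add_sub_cancel]
  have hftc := intervalIntegral.integral_hasDerivAt_right IntervalIntegrable.refl
    (hg.stronglyMeasurableAtFilter hI s₀ hs₀) (hg.continuousAt (hI.mem_nhds hs₀))
  exact (hftc.const_add _).congr_of_eventuallyEq
    (eventually_of_mem (hI.mem_nhds hs₀) hsub)

section IicIntegral

variable {Ω : Type*} [MeasurableSpace Ω] {μ : Measure Ω} {ψ : ℝ → Ω → ℝ}

lemma measurable_setIntegral_Iic (hψ : Measurable (uncurry ψ)) {b : Ω → ℝ} (hb : Measurable b) :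
    Measurable fun ω => ∫ t in Iic (b ω), ψ t ω := by
  have hS : MeasurableSet {q : Ω × ℝ | q.2 ≤ b q.1} :=
    measurableSet_le measurable_snd (hb.comp measurable_fst)
  convert (((hψ.comp measurable_swap).indicator hS).stronglyMeasurable.integral_prod_right'
    (ν := volume)).measurable using 2 with ω
  rw [← integral_indicator measurableSet_Iic]
  rfl

variable [IsFiniteMeasure μ]

lemma integrable_setIntegral_Iic (hψ : Measurable (uncurry ψ)) (hψ0 : ∀ t ω, 0 ≤ ψ t ω)
    (hmass : ∀ᵐ ω ∂μ, ∫⁻ t, ENNReal.ofReal (ψ t ω) = 1)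
    {b : Ω → ℝ} (hb : Measurable b) :
    Integrable (fun ω => ∫ t in Iic (b ω), ψ t ω) μ := by
  refine Integrable.mono' (integrable_const 1)
    (measurable_setIntegral_Iic hψ hb).aestronglyMeasurable ?_
  filter_upwards [hmass] with ω hω
  rw [Real.norm_of_nonneg (setIntegral_nonneg measurableSet_Iic fun t _ => hψ0 t ω),
    integral_eq_lintegral_of_nonneg_ae (ae_of_all _ fun t => hψ0 t ω)
      (hψ.comp measurable_prodMk_right).aestronglyMeasurable]
  refine ENNReal.toReal_le_of_le_ofReal zero_le_one ?_
  rw [ENNReal.ofReal_one, ← hω]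
  exact setLIntegral_le_lintegral _ _

lemma integrable_inv_sq_mul_comp (hψ : Measurable (uncurry ψ)) (hψ0 : ∀ t ω, 0 ≤ ψ t ω)
    (hmass : ∀ᵐ ω ∂μ, ∫⁻ t, ENNReal.ofReal (ψ t ω) = 1)
    {c : Ω → ℝ} (hc : Measurable c) {S : Set ℝ} (hS : MeasurableSet S) (h0 : (0 : ℝ) ∉ S) :
    Integrable (fun q : ℝ × Ω => -(q.1 ^ 2)⁻¹ * c q.2 * ψ (q.1⁻¹ * c q.2) q.2)
      ((volume.restrict S).prod μ) := by
  have hm : Measurable fun q : ℝ × Ω => -(q.1 ^ 2)⁻¹ * c q.2 * ψ (q.1⁻¹ * c q.2) q.2 :=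
    ((measurable_fst.pow_const 2).inv.neg.mul (hc.comp measurable_snd)).mul
      (hψ.comp ((measurable_fst.inv.mul (hc.comp measurable_snd)).prodMk measurable_snd))
  refine ⟨hm.aestronglyMeasurable, ?_⟩
  rw [hasFiniteIntegral_iff_enorm, lintegral_prod_symm _ hm.enorm.aemeasurable]
  calc ∫⁻ ω, (∫⁻ r in S, ‖-(r ^ 2)⁻¹ * c ω * ψ (r⁻¹ * c ω) ω‖ₑ) ∂μ
      ≤ ∫⁻ _, 1 ∂μ := by
        refine lintegral_mono_ae ?_
        filter_upwards [hmass] with ω hω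
        have hsplit : ∀ r, ‖-(r ^ 2)⁻¹ * c ω * ψ (r⁻¹ * c ω) ω‖ₑ
            = ‖-(r ^ 2)⁻¹ * c ω‖ₑ * ENNReal.ofReal (ψ (r⁻¹ * c ω) ω) := fun r => by
          rw [enorm_mul, Real.enorm_of_nonneg (hψ0 _ ω)]
        simp only [hsplit]
        exact (lintegral_enorm_inv_sq_mul_comp_le hS h0 (c ω) _).trans hω.le
    _ < ∞ := by simp

theorem hasDerivAt_integral_setIntegral_Iic_inv_mul (hψ : Measurable (uncurry ψ))
    (hψ0 : ∀ t ω, 0 ≤ ψ t ω) (hmass : ∀ᵐ ω ∂μ, ∫⁻ t, ENNReal.ofReal (ψ t ω) = 1)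
    (hψc : ∀ ω, Continuous fun t => ψ t ω) {c : Ω → ℝ} (hc : Measurable c)
    {I : Set ℝ} {s₀ : ℝ} (hI : IsOpen I) (hs₀ : s₀ ∈ I) (hI0 : ∀ s ∈ I, 0 < s * s₀)
    (hg : ContinuousOn (fun r => ∫ ω, c ω * ψ (r⁻¹ * c ω) ω ∂μ) I) :
    HasDerivAt (fun s => ∫ ω, (∫ t in Iic (s⁻¹ * c ω), ψ t ω) ∂μ)
      (-(s₀ ^ 2)⁻¹ * ∫ ω, c ω * ψ (s₀⁻¹ * c ω) ω ∂μ) s₀ := by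
  have hne : ∀ s ∈ I, s ≠ 0 := fun s hs h => by simpa [h] using hI0 s hs
  have h0 : ∀ s ∈ I, (0 : ℝ) ∉ uIcc s₀ s := by
    intro s hs h
    rcases mem_uIcc.mp h with ⟨h1, h2⟩ | ⟨h1, h2⟩ <;> nlinarith [hI0 s hs]
  have hint : ∀ᵐ ω ∂μ, Integrable fun t => ψ t ω := by
    filter_upwards [hmass] with ω hω
    exact (lintegral_ofReal_ne_top_iff_integrable
      (hψ.comp measurable_prodMk_right).aestronglyMeasurable (ae_of_all _ fun t => hψ0 t ω)).mp
      (hω ▸ ENNReal.one_ne_top)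
  have hg' : ContinuousOn (fun r => ∫ ω, -(r ^ 2)⁻¹ * c ω * ψ (r⁻¹ * c ω) ω ∂μ) I := by
    have hinv : ContinuousOn (fun r : ℝ => -(r ^ 2)⁻¹) I := fun r hr =>
      ((continuousAt_id.pow 2).inv₀ (pow_ne_zero 2 (hne r hr))).neg.continuousWithinAt
    refine (hinv.mul hg).congr fun r _ => ?_
    simp only [Pi.mul_apply, mul_assoc, integral_const_mul]
  have hderiv := hasDerivAt_integral_of_sub_eq_intervalIntegral
    (h := fun r ω => -(r ^ 2)⁻¹ * c ω * ψ (r⁻¹ * c ω) ω) hI hs₀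
    (fun s _ => integrable_setIntegral_Iic hψ hψ0 hmass (hc.const_mul _))
    (fun s hs => by
      filter_upwards [hint] with ω hω
      exact integral_Iic_inv_mul_sub (hψc ω) hω (c ω) (h0 s hs))
    (fun s hs => integrable_inv_sq_mul_comp hψ hψ0 hmass hc measurableSet_uIoc
      fun h => h0 s hs (uIoc_subset_uIcc h))
    hg'
  simpa only [mul_assoc, integral_const_mul] using hderiv

end IicIntegral

section Fcdf

variable {Ω : Type*} [MeasurableSpace Ω] {μ : Measure Ω} {m : ℕ}
  {X1 : Ω → ℝ} {Y : Ω → (Fin m → ℝ)} {φ : ℝ → (Fin m → ℝ) → ℝ} {U : Set (ℝ × (Fin m → ℝ))}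

lemma AssumptionA.integral_sub_sum_mul_eq (hA : AssumptionA μ X1 Y φ U) (t : ℝ)
    {p : ℝ × (Fin m → ℝ)} (hp : p ∈ U) :
    ∫ ω, (t - ∑ j, p.2 j * Y ω j) * φ (p.1⁻¹ * (t - ∑ j, p.2 j * Y ω j)) (Y ω) ∂μ
      = t * densNum μ Y φ t p - ∑ j, p.2 j * densNumX μ Y φ j t p := by
  obtain ⟨-, -, -, hint, -, hintX, -⟩ := hA
  have hsum := integrable_finsetSum Finset.univ fun j _ => (hintX j t p hp).const_mul (p.2 j)
  simp only [sub_mul, Finset.sum_mul, mul_assoc]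
  rw [integral_sub ((hint t p hp).const_mul t) hsum, integral_finsetSum _ fun j _ =>
    (hintX j t p hp).const_mul (p.2 j)]
  simp only [integral_const_mul, densNum, densNumX]

lemma AssumptionA.continuousOn_integral_sub_sum_mul (hA : AssumptionA μ X1 Y φ U) :
    ContinuousOn (fun q : ℝ × (ℝ × (Fin m → ℝ)) =>
        ∫ ω, (q.1 - ∑ j, q.2.2 j * Y ω j)
          * φ (q.2.1⁻¹ * (q.1 - ∑ j, q.2.2 j * Y ω j)) (Y ω) ∂μ)
      (univ ×ˢ U) := by
  refine ContinuousOn.congr (f := fun q => q.1 * densNum μ Y φ q.1 q.2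
      - ∑ j, q.2.2 j * densNumX μ Y φ j q.1 q.2) ?_
    fun q hq => hA.integral_sub_sum_mul_eq q.1 hq.2
  obtain ⟨-, -, -, -, hcont, -, hcontX⟩ := hA
  exact (continuous_fst.continuousOn.mul hcont).sub (continuousOn_finsetSum _ fun j _ =>
    (continuous_apply j).comp (continuous_snd.comp continuous_snd) |>.continuousOn.mul (hcontX j))

lemma continuousOn_neg_sign_div_sq : ContinuousOn (fun s : ℝ => -Real.sign s / s ^ 2) {0}ᶜ := by
  intro s hs
  have hsign : (fun r : ℝ => -Real.sign r / r ^ 2) =ᶠ[𝓝 s] fun r => -Real.sign s / r ^ 2 := by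
    rcases lt_or_gt_of_ne hs with h | h
    · filter_upwards [Iio_mem_nhds h] with r hr
      rw [Real.sign_of_neg hr, Real.sign_of_neg h]
    · filter_upwards [Ioi_mem_nhds h] with r hr
      rw [Real.sign_of_pos hr, Real.sign_of_pos h]
  exact ((continuousAt_const.div (continuousAt_id.pow 2) (pow_ne_zero 2 hs)).congr
    hsign.symm).continuousWithinAt

variable [IsProbabilityMeasure μ]

namespace IsCondDensity

lemma fcdf_of_pos (hX1 : Measurable X1) (hY : Measurable Y) (hφ : IsCondDensity μ X1 Y φ)
    (z : ℝ) {s : ℝ} (hs : 0 < s) (u : Fin m → ℝ) :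
    Fcdf μ X1 Y z (s, u) = ∫ ω, (∫ t in Iic (s⁻¹ * (z - ∑ j, u j * Y ω j)), φ t (Y ω)) ∂μ := by
  have hS : MeasurableSet {q : (Fin m → ℝ) × ℝ | q.2 ≤ s⁻¹ * (z - ∑ j, u j * q.1 j)} :=
    measurableSet_le measurable_snd (by fun_prop)
  have hset : {ω | Zw X1 Y (s, u) ω ≤ z}
      = (fun ω => (Y ω, X1 ω)) ⁻¹' {q | q.2 ≤ s⁻¹ * (z - ∑ j, u j * q.1 j)} := by
    ext ω
    simp only [Zw, mem_ofPred_eq, mem_preimage, le_inv_mul_iff₀ hs]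
    constructor <;> intro <;> linarith
  rw [Fcdf, hset, hφ.toReal_measure_preimage hX1 hY hS]
  rfl

lemma fcdf_of_neg (hX1 : Measurable X1) (hY : Measurable Y) (hφ : IsCondDensity μ X1 Y φ)
    (z : ℝ) {s : ℝ} (hs : s < 0) (u : Fin m → ℝ) :
    Fcdf μ X1 Y z (s, u)
      = 1 - ∫ ω, (∫ t in Iic (s⁻¹ * (z - ∑ j, u j * Y ω j)), φ t (Y ω)) ∂μ := by
  have hS : MeasurableSet {q : (Fin m → ℝ) × ℝ | q.2 < s⁻¹ * (z - ∑ j, u j * q.1 j)} :=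
    measurableSet_lt measurable_snd (by fun_prop)
  have hset : {ω | Zw X1 Y (s, u) ω ≤ z}
      = ((fun ω => (Y ω, X1 ω)) ⁻¹' {q | q.2 < s⁻¹ * (z - ∑ j, u j * q.1 j)})ᶜ := by
    ext ω
    simp only [Zw, mem_ofPred_eq, mem_preimage, mem_compl_iff, not_lt, inv_mul_eq_div,
      div_le_iff_of_neg hs]
    constructor <;> intro <;> linarith
  rw [Fcdf, hset, prob_compl_eq_one_sub (hS.preimage (hY.prodMk hX1)),
    ENNReal.toReal_sub_of_le prob_le_one ENNReal.one_ne_top, ENNReal.toReal_one,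
    hφ.toReal_measure_preimage hX1 hY hS]
  exact congrArg _ (integral_congr_ae (ae_of_all _ fun ω => setIntegral_congr_set
    (Iio_ae_eq_Iic (a := s⁻¹ * (z - ∑ j, u j * Y ω j)))))

theorem hasDerivAt_fcdf_fst (hX1 : Measurable X1) (hY : Measurable Y)
    (hφ : IsCondDensity μ X1 Y φ) (hA : AssumptionA μ X1 Y φ U) (z : ℝ)
    {p : ℝ × (Fin m → ℝ)} (hp : p ∈ U) :
    HasDerivAt (fun s => Fcdf μ X1 Y z (s, p.2))
      (-(Real.sign p.1) / p.1 ^ 2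
        * ∫ ω, (z - ∑ j, p.2 j * Y ω j) * φ (p.1⁻¹ * (z - ∑ j, p.2 j * Y ω j)) (Y ω) ∂μ)
      p.1 := by
  obtain ⟨s₀, u⟩ := p
  set I := {s | (s, u) ∈ U} ∩ {s | 0 < s * s₀}
  have hg : ContinuousOn (fun r => ∫ ω, (z - ∑ j, u j * Y ω j)
      * φ (r⁻¹ * (z - ∑ j, u j * Y ω j)) (Y ω) ∂μ) I :=
    hA.continuousOn_integral_sub_sum_mul.comp
      (continuous_const.prodMk (continuous_id.prodMk continuous_const)).continuousOn
      fun r (hr : r ∈ I) => ⟨mem_univ z, hr.1⟩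
  obtain ⟨hU, hU0, hφc, -⟩ := hA
  have hs₀ : s₀ ≠ 0 := hU0 _ hp
  have hc : Measurable fun ω => z - ∑ j, u j * Y ω j := by fun_prop
  have hI : IsOpen I :=
    (hU.preimage (by fun_prop)).inter (isOpen_lt continuous_const (by fun_prop))
  have hmass : ∀ᵐ ω ∂μ, ∫⁻ t, ENNReal.ofReal (φ t (Y ω)) = 1 := by
    filter_upwards [ae_of_ae_map hY.aemeasurable (hφ.ae_densityKernel_univ hY)] with ω hω
    rwa [densityKernel_apply hφ.1, Measure.restrict_univ] at hω
  have hΨ := hasDerivAt_integral_setIntegral_Iic_inv_mul (ψ := fun t ω => φ t (Y ω))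
    (hφ.1.comp (measurable_fst.prodMk (hY.comp measurable_snd))) (fun t ω => hφ.2.1 t (Y ω))
    hmass (fun ω => hφc (Y ω)) hc hI ⟨hp, mul_self_pos.mpr hs₀⟩ (fun s hs => hs.2) hg
  rcases hs₀.lt_or_gt with hneg | hpos
  · have hF := (hΨ.const_sub 1).congr_of_eventuallyEq (eventually_of_mem (Iio_mem_nhds hneg)
      fun s hs => hφ.fcdf_of_neg hX1 hY z hs u)
    refine hF.congr_deriv ?_
    rw [Real.sign_of_neg hneg]
    ring
  · have hF := hΨ.congr_of_eventuallyEq (eventually_of_mem (Ioi_mem_nhds hpos)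
      fun s hs => hφ.fcdf_of_pos hX1 hY z hs u)
    refine hF.congr_deriv ?_
    rw [Real.sign_of_pos hpos]
    ring

end IsCondDensity

end Fcdf

theorem stmt11_general {Ω : Type*} [MeasurableSpace Ω] (μ : Measure Ω) [IsProbabilityMeasure μ]
    (m : ℕ)
    (X1 : Ω → ℝ) (Y : Ω → (Fin m → ℝ)) (hX1 : Measurable X1) (hY : Measurable Y)
    (φ : ℝ → (Fin m → ℝ) → ℝ) (hφ : IsCondDensity μ X1 Y φ)
    (U : Set (ℝ × (Fin m → ℝ))) (hA : AssumptionA μ X1 Y φ U) :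
    (∀ (z : ℝ), ∀ p ∈ U,
      HasDerivAt (fun s => Fcdf μ X1 Y z (s, p.2))
        (-(Real.sign p.1) / p.1 ^ 2
          * ∫ ω, (z - ∑ j, p.2 j * Y ω j)
              * φ (p.1⁻¹ * (z - ∑ j, p.2 j * Y ω j)) (Y ω) ∂μ) p.1) ∧
    ContinuousOn (fun q : ℝ × (ℝ × (Fin m → ℝ)) =>
        -(Real.sign q.2.1) / q.2.1 ^ 2
          * ∫ ω, (q.1 - ∑ j, q.2.2 j * Y ω j)
              * φ (q.2.1⁻¹ * (q.1 - ∑ j, q.2.2 j * Y ω j)) (Y ω) ∂μ)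
      (Set.univ ×ˢ U) :=
  ⟨fun z _ hp => hφ.hasDerivAt_fcdf_fst hX1 hY hA z hp,
    (continuousOn_neg_sign_div_sq.comp (continuous_fst.comp continuous_snd).continuousOn
      fun q hq => hA.2.1 q.2 hq.2).mul hA.continuousOn_integral_sub_sum_mul⟩

/-- Under Assumption A, `F(z,u) = P(Σ u_i X_i ≤ z)` is partially differentiable in `u₁` with
jointly continuous derivative
`∂F/∂u₁ = -sign(u₁) u₁⁻² E[(z - Σ_{j≥2} u_j X_j) φ(u₁⁻¹(z - Σ_{j≥2} u_j X_j), X₂,…,X_d)]`. -/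
theorem stmt11 {Ω : Type*} [MeasurableSpace Ω] (μ : Measure Ω) [IsProbabilityMeasure μ]
    (m : ℕ) (hm : 1 ≤ m)
    (X1 : Ω → ℝ) (Y : Ω → (Fin m → ℝ)) (hX1 : Measurable X1) (hY : Measurable Y)
    (φ : ℝ → (Fin m → ℝ) → ℝ) (hφ : IsCondDensity μ X1 Y φ)
    (U : Set (ℝ × (Fin m → ℝ))) (hA : AssumptionA μ X1 Y φ U) :
    (∀ (z : ℝ), ∀ p ∈ U,
      HasDerivAt (fun s => Fcdf μ X1 Y z (s, p.2))
        (-(Real.sign p.1) / p.1 ^ 2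
          * ∫ ω, (z - ∑ j, p.2 j * Y ω j)
              * φ (p.1⁻¹ * (z - ∑ j, p.2 j * Y ω j)) (Y ω) ∂μ) p.1) ∧
    ContinuousOn (fun q : ℝ × (ℝ × (Fin m → ℝ)) =>
        -(Real.sign q.2.1) / q.2.1 ^ 2
          * ∫ ω, (q.1 - ∑ j, q.2.2 j * Y ω j)
              * φ (q.2.1⁻¹ * (q.1 - ∑ j, q.2.2 j * Y ω j)) (Y ω) ∂μ)
      (Set.univ ×ˢ U) :=
  stmt11_general μ m X1 Y hX1 hY φ hφ U hA
end

section
/- If X₁ and (X₂,…,X_d) are independent, each X_i (i ≥ 2) is integrable, and X₁ has a bounded continuous density f, then the function φ(t, x₂,…,x_d) = f(t) is a conditional density of X₁ given (X₂,…,X_d) satisfying Assumption A on any open set U ⊆ (ℝ∖{0}) × ℝ^{d−1}: in particular, (t,u) ↦ E[f(u₁⁻¹(t − Σ_{j=2}^d u_j X_j))] and (t,u) ↦ E[X_i · f(u₁⁻¹(t − Σ_{j=2}^d u_j X_j))] are finite-valued and jointly continuous on ℝ × U. -/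
/-!
Independence factorises `P(X₁ ∈ A, Y ∈ B) = P(Y ∈ B) ∫_A f`, which is exactly the
conditional-density identity for `φ(t, y) = f(t)`. For Assumption A, the integrands
`w · f(u₁⁻¹(t - Σ u_j X_j))` with `w = 1` or `w = X_i` are continuous in `(t, u)` whenever
`u₁ ≠ 0` and are dominated by the integrable `C |w|`, so dominated convergence gives
joint continuity.
-/

open MeasureTheory

open ProbabilityTheory

theorem isCondDensity_of_indepFun {Ω : Type*} [MeasurableSpace Ω] {μ : Measure Ω} {m : ℕ}
    {X1 : Ω → ℝ} {Y : Ω → Fin m → ℝ} (hindep : IndepFun X1 Y μ) {f : ℝ → ℝ}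
    (hf0 : ∀ t, 0 ≤ f t) (hfm : Measurable f)
    (hfdens : ∀ A : Set ℝ, MeasurableSet A → (μ {ω | X1 ω ∈ A}).toReal = ∫ t in A, f t) :
    IsCondDensity μ X1 Y (fun t _ => f t) := by
  refine ⟨hfm.comp measurable_fst, fun t _ => hf0 t, fun A hA B hB => ?_⟩
  change (μ (X1 ⁻¹' A ∩ Y ⁻¹' B)).toReal = ∫ _ in Y ⁻¹' B, ∫ t in A, f t ∂volume ∂μ
  rw [hindep.measure_inter_preimage_eq_mul A B hA hB, ENNReal.toReal_mul, setIntegral_const,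
    smul_eq_mul, measureReal_def, mul_comm, ← hfdens A hA]
  rfl

section

variable {Ω : Type*} [MeasurableSpace Ω] {μ : Measure Ω} {m : ℕ} {Y : Ω → Fin m → ℝ}
  {f : ℝ → ℝ} {C : ℝ} {w : Ω → ℝ}

theorem measurable_inv_mul_sub_sum (hY : Measurable Y) (t : ℝ) (p : ℝ × (Fin m → ℝ)) :
    Measurable fun ω => p.1⁻¹ * (t - ∑ i, p.2 i * Y ω i) :=
  ((Finset.measurable_sum _ fun i _ =>
    ((measurable_pi_apply i).comp hY).const_mul (p.2 i)).const_sub t).const_mul _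

theorem continuousOn_inv_mul_sub_sum (y : Fin m → ℝ) :
    ContinuousOn (fun q : ℝ × ℝ × (Fin m → ℝ) => q.2.1⁻¹ * (q.1 - ∑ i, q.2.2 i * y i))
      (Set.univ ×ˢ {p | p.1 ≠ 0}) := by
  refine ContinuousOn.mul ?_ (by fun_prop)
  exact (continuous_fst.comp continuous_snd).continuousOn.inv₀ fun q hq => hq.2

theorem integrable_mul_comp_inv_mul_sub_sum (hY : Measurable Y) (hw : Integrable w μ)
    (hfm : Measurable f) (hfb : ∀ t, ‖f t‖ ≤ C) (t : ℝ) (p : ℝ × (Fin m → ℝ)) :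
    Integrable (fun ω => w ω * f (p.1⁻¹ * (t - ∑ i, p.2 i * Y ω i))) μ :=
  hw.mul_bdd (hfm.comp (measurable_inv_mul_sub_sum hY t p)).aestronglyMeasurable
    (.of_forall fun _ => hfb _)

theorem continuousOn_integral_mul_comp_inv_mul_sub_sum (hY : Measurable Y)
    (hw : Integrable w μ) (hfc : Continuous f) (hfb : ∀ t, ‖f t‖ ≤ C) :
    ContinuousOn
      (fun q : ℝ × ℝ × (Fin m → ℝ) =>
        ∫ ω, w ω * f (q.2.1⁻¹ * (q.1 - ∑ i, q.2.2 i * Y ω i)) ∂μ)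
      (Set.univ ×ˢ {p | p.1 ≠ 0}) := by
  refine continuousOn_of_dominated (bound := fun ω => ‖w ω‖ * C)
    (fun q _ => (integrable_mul_comp_inv_mul_sub_sum hY hw hfc.measurable hfb q.1 q.2)
      |>.aestronglyMeasurable)
    (fun q _ => .of_forall fun ω => ?_) (hw.norm.mul_const C)
    (.of_forall fun ω => continuousOn_const.mul
      (hfc.comp_continuousOn (continuousOn_inv_mul_sub_sum (Y ω))))
  rw [norm_mul]
  exact mul_le_mul_of_nonneg_left (hfb _) (norm_nonneg _)

end

theorem stmt16_general {Ω : Type*} [MeasurableSpace Ω] (μ : Measure Ω) [IsProbabilityMeasure μ]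
    (m : ℕ)
    (X1 : Ω → ℝ) (Y : Ω → (Fin m → ℝ)) (hY : Measurable Y)
    (hindep : ProbabilityTheory.IndepFun X1 Y μ)
    (hYint : ∀ i, Integrable (fun ω => Y ω i) μ)
    (f : ℝ → ℝ) (hf0 : ∀ t, 0 ≤ f t) (hfc : Continuous f)
    (C : ℝ) (hfb : ∀ t, f t ≤ C)
    (hfdens : ∀ A : Set ℝ, MeasurableSet A →
      (μ {ω | X1 ω ∈ A}).toReal = ∫ t in A, f t ∂(volume)) :
    IsCondDensity μ X1 Y (fun t _ => f t) ∧
    ∀ U : Set (ℝ × (Fin m → ℝ)), IsOpen U → (∀ p ∈ U, p.1 ≠ 0) →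
      AssumptionA μ X1 Y (fun t _ => f t) U := by
  have hfb' : ∀ t, ‖f t‖ ≤ C := fun t => by rw [Real.norm_of_nonneg (hf0 t)]; exact hfb t
  have hone : Integrable (fun _ : Ω => (1 : ℝ)) μ := integrable_const 1
  refine ⟨isCondDensity_of_indepFun hindep hf0 hfc.measurable hfdens,
    fun U hU hU0 => ⟨hU, hU0, fun _ => hfc, fun t p _ => ?_, ?_, fun i t p _ => ?_, fun i => ?_⟩⟩
  · simpa using integrable_mul_comp_inv_mul_sub_sum hY hone hfc.measurable hfb' t p
  · simpa [densNum] using (continuousOn_integral_mul_comp_inv_mul_sub_sum hY hone hfc hfb').mono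
      (Set.prod_mono le_rfl hU0)
  · exact integrable_mul_comp_inv_mul_sub_sum hY (hYint i) hfc.measurable hfb' t p
  · exact (continuousOn_integral_mul_comp_inv_mul_sub_sum hY (hYint i) hfc hfb').mono
      (Set.prod_mono le_rfl hU0)

/-- Remark 2.4(4): if `X₁` is independent of `(X₂,…,X_d)`, each `X_i` (`i ≥ 2`) is integrable,
and `X₁` has a bounded continuous density `f`, then `φ(t, x₂,…,x_d) = f(t)` is a conditional
density of `X₁` given `(X₂,…,X_d)` satisfying Assumption A on any open
`U ⊆ (ℝ∖{0}) × ℝ^{d-1}`; in particular `(t,u) ↦ E[f(u₁⁻¹(t - Σ u_j X_j))]` and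
`(t,u) ↦ E[X_i f(u₁⁻¹(t - Σ u_j X_j))]` are finite-valued and jointly continuous on `ℝ × U`. -/
theorem stmt16 {Ω : Type*} [MeasurableSpace Ω] (μ : Measure Ω) [IsProbabilityMeasure μ]
    (m : ℕ) (hm : 1 ≤ m)
    (X1 : Ω → ℝ) (Y : Ω → (Fin m → ℝ)) (hX1 : Measurable X1) (hY : Measurable Y)
    (hindep : ProbabilityTheory.IndepFun X1 Y μ)
    (hYint : ∀ i, Integrable (fun ω => Y ω i) μ)
    (f : ℝ → ℝ) (hf0 : ∀ t, 0 ≤ f t) (hfc : Continuous f)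
    (C : ℝ) (hfb : ∀ t, f t ≤ C)
    (hfdens : ∀ A : Set ℝ, MeasurableSet A →
      (μ {ω | X1 ω ∈ A}).toReal = ∫ t in A, f t ∂(volume)) :
    IsCondDensity μ X1 Y (fun t _ => f t) ∧
    ∀ U : Set (ℝ × (Fin m → ℝ)), IsOpen U → (∀ p ∈ U, p.1 ≠ 0) →
      AssumptionA μ X1 Y (fun t _ => f t) U :=
  stmt16_general μ m X1 Y hY hindep hYint f hf0 hfc C hfb hfdens
end

section
/- Let Y be a random variable with continuous distribution (P(Y = y) = 0 for all y) and P(Y ≤ q) = α ∈ (0,1) where q = Q_α(Y), and similarly for X. If X ≤ Y almost surely, then E[X | X ≤ Q_α(X)] ≤ E[Y | Y ≤ Q_α(Y)]. -/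
open MeasureTheory

/-!
A sublevel set `A = {X ≤ c}` carries the smallest integral of `X` among all events `B` of the
same probability: trading `A \ B`, where `X ≤ c`, for `B \ A`, where `X ≥ c`, moves equal mass
from values below `c` to values above `c`. Hence
`E[X; X ≤ Q_α(X)] ≤ E[X; Y ≤ Q_α(Y)] ≤ E[Y; Y ≤ Q_α(Y)]`, and both events have probability `α`.
-/

namespace MeasureTheory

variable {Ω : Type*} [MeasurableSpace Ω] {μ : Measure Ω} [IsFiniteMeasure μ] {A B : Set Ω}

theorem measureReal_sdiff_eq_of_measureReal_eq (hA : MeasurableSet A) (hB : MeasurableSet B)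
    (h : μ.real A = μ.real B) : μ.real (A \ B) = μ.real (B \ A) := by
  have hAB := measureReal_inter_add_sdiff (μ := μ) (s := A) hB
  have hBA := measureReal_inter_add_sdiff (μ := μ) (s := B) hA
  rw [Set.inter_comm] at hBA
  linarith

theorem setIntegral_le_setIntegral_of_measureReal_eq {X : Ω → ℝ} (hX : Integrable X μ)
    (hA : MeasurableSet A) (hB : MeasurableSet B) (hμ : μ.real A = μ.real B) {c : ℝ}
    (hXA : ∀ ω ∈ A, X ω ≤ c) (hXAc : ∀ ω ∉ A, c ≤ X ω) :
    ∫ ω in A, X ω ∂μ ≤ ∫ ω in B, X ω ∂μ := by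
  have hAB : ∫ ω in A \ B, X ω ∂μ ≤ c * μ.real (A \ B) := by
    rw [mul_comm, ← smul_eq_mul, ← setIntegral_const]
    exact setIntegral_mono_on hX.integrableOn (integrableOn_const (measure_ne_top _ _))
      (hA.diff hB) fun ω hω => hXA ω hω.1
  have hBA : c * μ.real (B \ A) ≤ ∫ ω in B \ A, X ω ∂μ :=
    setIntegral_ge_of_const_le_real (hB.diff hA) (measure_ne_top _ _)
      (fun ω hω => hXAc ω hω.2) hX.integrableOn
  rw [measureReal_sdiff_eq_of_measureReal_eq hA hB hμ] at hAB
  rw [← integral_inter_add_sdiff hB hX.integrableOn,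
    ← integral_inter_add_sdiff (s := B) hA hX.integrableOn, Set.inter_comm B A]
  linarith

end MeasureTheory

theorem stmt18_general {Ω : Type*} [MeasurableSpace Ω] (μ : Measure Ω) [IsProbabilityMeasure μ]
    (α : ℝ)
    (X Y : Ω → ℝ) (hXm : Measurable X) (hYm : Measurable Y)
    (hXint : Integrable X μ) (hYint : Integrable Y μ)
    (hqX : (μ {ω | X ω ≤ quantile μ α X}).toReal = α)
    (hqY : (μ {ω | Y ω ≤ quantile μ α Y}).toReal = α)
    (hle : ∀ᵐ ω ∂μ, X ω ≤ Y ω) :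
    condExpEvent μ X {ω | X ω ≤ quantile μ α X}
      ≤ condExpEvent μ Y {ω | Y ω ≤ quantile μ α Y} := by
  set A := {ω | X ω ≤ quantile μ α X}
  set B := {ω | Y ω ≤ quantile μ α Y}
  have hA : MeasurableSet A := hXm measurableSet_Iic
  have hB : MeasurableSet B := hYm measurableSet_Iic
  have hα : 0 ≤ α := hqX ▸ ENNReal.toReal_nonneg
  unfold condExpEvent
  rw [hqX, hqY]
  gcongr
  calc ∫ ω in A, X ω ∂μ ≤ ∫ ω in B, X ω ∂μ :=
        setIntegral_le_setIntegral_of_measureReal_eq hXint hA hB (hqX.trans hqY.symm)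
          (fun _ h => h) fun _ h => (not_le.mp h).le
    _ ≤ ∫ ω in B, Y ω ∂μ := setIntegral_mono_ae_restrict hXint.integrableOn
        hYint.integrableOn (ae_restrict_of_ae hle)

/-- If `X` and `Y` have continuous distributions with `P(X ≤ Q_α(X)) = P(Y ≤ Q_α(Y)) = α` and
`X ≤ Y` a.s., then `E[X | X ≤ Q_α(X)] ≤ E[Y | Y ≤ Q_α(Y)]`. -/
theorem stmt18 {Ω : Type*} [MeasurableSpace Ω] (μ : Measure Ω) [IsProbabilityMeasure μ]
    (α : ℝ) (hα : α ∈ Set.Ioo (0 : ℝ) 1)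
    (X Y : Ω → ℝ) (hXm : Measurable X) (hYm : Measurable Y)
    (hXint : Integrable X μ) (hYint : Integrable Y μ)
    (hXcont : ∀ x : ℝ, μ {ω | X ω = x} = 0) (hYcont : ∀ y : ℝ, μ {ω | Y ω = y} = 0)
    (hqX : (μ {ω | X ω ≤ quantile μ α X}).toReal = α)
    (hqY : (μ {ω | Y ω ≤ quantile μ α Y}).toReal = α)
    (hle : ∀ᵐ ω ∂μ, X ω ≤ Y ω) :
    condExpEvent μ X {ω | X ω ≤ quantile μ α X}
      ≤ condExpEvent μ Y {ω | Y ω ≤ quantile μ α Y} :=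
  stmt18_general μ α X Y hXm hYm hXint hYint hqX hqY hle
end

section
/- Let X, Y, and X+Y be integrable random variables each satisfying P(W ≤ Q_α(W)) = α for W ∈ {X, Y, X+Y}, α ∈ (0,1). Then E[X + Y | X+Y ≤ Q_α(X+Y)] ≥ E[X | X ≤ Q_α(X)] + E[Y | Y ≤ Q_α(Y)]. -/
/-!
Among all events of probability `α`, the lower tail `{X ≤ Q_α(X)}` minimises the conditional
mean of `X`: exchanging an event `F` of the same probability for the tail replaces the part of
`F` where `X > q` by an equally likely part of the tail where `X ≤ q`. The event
`{X + Y ≤ Q_α(X + Y)}` has probability `α`, so conditioning `X` and `Y` on it gives at least the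
two tail means, and the conditional mean of `X + Y` on it is the sum of those two.
-/

open MeasureTheory

section CondExpEvent

variable {Ω : Type*} [MeasurableSpace Ω] {μ : Measure Ω}

theorem condExpEvent_add {X Y : Ω → ℝ} {A : Set Ω} (hX : IntegrableOn X A μ)
    (hY : IntegrableOn Y A μ) :
    condExpEvent μ (X + Y) A = condExpEvent μ X A + condExpEvent μ Y A := by
  simp only [condExpEvent, Pi.add_apply, integral_add hX hY, add_div]

section Sublevel

variable [IsFiniteMeasure μ] {X : Ω → ℝ} {q : ℝ} {F : Set Ω}

theorem setIntegral_sublevel_le_of_measureReal_eq (hX : Integrable X μ)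
    (hF : NullMeasurableSet F μ) (hμ : μ.real F = μ.real {ω | X ω ≤ q}) :
    ∫ ω in {ω | X ω ≤ q}, X ω ∂μ ≤ ∫ ω in F, X ω ∂μ := by
  set A := {ω | X ω ≤ q}
  have hA : NullMeasurableSet A μ := nullMeasurableSet_le hX.aemeasurable aemeasurable_const
  have h_sdiff : μ.real (A \ F) = μ.real (F \ A) := by
    have hA_split := measureReal_inter_add_sdiff₀ (s := A) hF
    have hF_split := measureReal_inter_add_sdiff₀ (s := F) hA
    rw [Set.inter_comm] at hF_split
    linarith
  have hA_sdiff_le : ∫ ω in A \ F, X ω ∂μ ≤ q * μ.real (A \ F) := by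
    calc ∫ ω in A \ F, X ω ∂μ ≤ ∫ _ in A \ F, q ∂μ :=
          setIntegral_mono_on₀ hX.integrableOn integrableOn_const (hA.diff hF)
            fun ω hω => hω.1
      _ = q * μ.real (A \ F) := by rw [setIntegral_const, smul_eq_mul, mul_comm]
  have hF_sdiff_ge : q * μ.real (F \ A) ≤ ∫ ω in F \ A, X ω ∂μ := by
    calc q * μ.real (F \ A) = ∫ _ in F \ A, q ∂μ := by
          rw [setIntegral_const, smul_eq_mul, mul_comm]
      _ ≤ ∫ ω in F \ A, X ω ∂μ :=
          setIntegral_mono_on₀ integrableOn_const hX.integrableOn (hF.diff hA)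
            fun ω hω => (not_le.mp hω.2).le
  have hA_int := integral_inter_add_sdiff₀ hF (hX.integrableOn (s := A))
  have hF_int := integral_inter_add_sdiff₀ hA (hX.integrableOn (s := F))
  rw [Set.inter_comm] at hF_int
  rw [h_sdiff] at hA_sdiff_le
  linarith

theorem condExpEvent_sublevel_le_of_measureReal_eq (hX : Integrable X μ)
    (hF : NullMeasurableSet F μ) (hμ : μ.real F = μ.real {ω | X ω ≤ q}) :
    condExpEvent μ X {ω | X ω ≤ q} ≤ condExpEvent μ X F := by
  rw [condExpEvent, condExpEvent, ← measureReal_def, ← measureReal_def, hμ]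
  exact div_le_div_of_nonneg_right (setIntegral_sublevel_le_of_measureReal_eq hX hF hμ)
    measureReal_nonneg

end Sublevel

end CondExpEvent

theorem stmt19_general {Ω : Type*} [MeasurableSpace Ω] (μ : Measure Ω) [IsProbabilityMeasure μ]
    (α : ℝ)
    (X Y : Ω → ℝ)
    (hXint : Integrable X μ) (hYint : Integrable Y μ)
    (hqX : (μ {ω | X ω ≤ quantile μ α X}).toReal = α)
    (hqY : (μ {ω | Y ω ≤ quantile μ α Y}).toReal = α)
    (hqXY : (μ {ω | X ω + Y ω ≤ quantile μ α (X + Y)}).toReal = α) :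
    condExpEvent μ X {ω | X ω ≤ quantile μ α X}
        + condExpEvent μ Y {ω | Y ω ≤ quantile μ α Y}
      ≤ condExpEvent μ (X + Y) {ω | X ω + Y ω ≤ quantile μ α (X + Y)} := by
  set S := {ω | X ω + Y ω ≤ quantile μ α (X + Y)}
  have hS : NullMeasurableSet S μ :=
    nullMeasurableSet_le (hXint.add hYint).aemeasurable aemeasurable_const
  rw [condExpEvent_add hXint.integrableOn hYint.integrableOn]
  exact add_le_add
    (condExpEvent_sublevel_le_of_measureReal_eq hXint hS (hqXY.trans hqX.symm))
    (condExpEvent_sublevel_le_of_measureReal_eq hYint hS (hqXY.trans hqY.symm))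

/-- If `X`, `Y`, `X+Y` are integrable with `P(W ≤ Q_α(W)) = α` for `W ∈ {X, Y, X+Y}`, then
`E[X+Y | X+Y ≤ Q_α(X+Y)] ≥ E[X | X ≤ Q_α(X)] + E[Y | Y ≤ Q_α(Y)]`. -/
theorem stmt19 {Ω : Type*} [MeasurableSpace Ω] (μ : Measure Ω) [IsProbabilityMeasure μ]
    (α : ℝ) (hα : α ∈ Set.Ioo (0 : ℝ) 1)
    (X Y : Ω → ℝ) (hXm : Measurable X) (hYm : Measurable Y)
    (hXint : Integrable X μ) (hYint : Integrable Y μ)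
    (hqX : (μ {ω | X ω ≤ quantile μ α X}).toReal = α)
    (hqY : (μ {ω | Y ω ≤ quantile μ α Y}).toReal = α)
    (hqXY : (μ {ω | X ω + Y ω ≤ quantile μ α (X + Y)}).toReal = α) :
    condExpEvent μ X {ω | X ω ≤ quantile μ α X}
        + condExpEvent μ Y {ω | Y ω ≤ quantile μ α Y}
      ≤ condExpEvent μ (X + Y) {ω | X ω + Y ω ≤ quantile μ α (X + Y)} :=
  stmt19_general μ α X Y hXint hYint hqX hqY hqXY
end
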